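/- arXiv:2403.04110 — 2 statements merged into one kernel-verified Lean document; each statement's English description precedes it below -/
import Mathlib

section
/- Let G be a finite simple maximal outerplanar graph and let xy be an edge of G with d_x ≤ d_y whose common neighborhood is N(x) ∩ N(y) = {w, z} with w ≠ z, such that |N(x) ∩ N(w) \ {y}| = 0, |N(x) ∩ N(z) \ {y}| = 1, |N(y) ∩ N(w) \ {x}| = 1, and |N(y) ∩ N(z) \ {x}| = 1. Then the Lin–Lu–Yau curvature satisfies κ(x,y) = 5/d_x + 6/d_y − 2 if d_y < 2·d_x, and κ(x,y) = 4/d_x + 8/d_y − 2 if d_y ≥ 2·d_x. -/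
/-!
Maximal outerplanar graphs are connected: joining two components by an edge creates no `K₄`
or `K_{2,3}` minor, since both graphs are `2`-connected. The same two forbidden minors pin down
the neighbourhood of `xy`: the common neighbour `w'` of `y` and `w` differs from the common
neighbour `z''` of `y` and `z`, no other neighbour of `x` is adjacent to `z''`, and every other
neighbour of `x` is at distance at least `3` from every other neighbour of `y`.

Let `A = 1` if `d_y < 2 d_x` and `A = 0` otherwise. For a `1`-Lipschitz `g` with
`g y - g x = 1`, both `a = g w - g x` and `b = g z - g x` lie in `{0, 1}`, and bounding `g`
edge by edge around `x` and `y` bounds `Δg(x) - Δg(y)` below by an expression in `a` and `b`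
that is smallest at `(a, b) = (A, 0)`. This value is attained by the McShane extension of the
function that is `0` at `x` and `z`, `1` at `y`, `A` at `w` and `-1` on the rest of `N(x)`.
-/

open SimpleGraph

/-- `H` is a minor of `G`: there is a family of nonempty, connected, pairwise disjoint
branch sets in `G`, one for each vertex of `H`, with an edge of `G` between the branch
sets corresponding to each edge of `H`. -/
def SimpleGraph.IsMinorOf {W : Type*} {V : Type*} (H : SimpleGraph W) (G : SimpleGraph V) :
    Prop :=
  ∃ B : W → Set V,
    (∀ w, (G.induce (B w)).Connected) ∧
    (Pairwise fun w₁ w₂ => Disjoint (B w₁) (B w₂)) ∧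
    ∀ ⦃w₁ w₂⦄, H.Adj w₁ w₂ → ∃ u ∈ B w₁, ∃ v ∈ B w₂, G.Adj u v

/-- A graph is outerplanar iff it has no `K₄` minor and no `K_{2,3}` minor
(Chartrand–Harary). -/
def Outerplanar {V : Type*} (G : SimpleGraph V) : Prop :=
  ¬ (completeGraph (Fin 4)).IsMinorOf G ∧
  ¬ (completeBipartiteGraph (Fin 2) (Fin 3)).IsMinorOf G

/-- A graph is planar iff it has no `K₅` minor and no `K_{3,3}` minor (Wagner). -/
def Planar {V : Type*} (G : SimpleGraph V) : Prop :=
  ¬ (completeGraph (Fin 5)).IsMinorOf G ∧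
  ¬ (completeBipartiteGraph (Fin 3) (Fin 3)).IsMinorOf G

/-- A maximal outerplanar graph: outerplanar, and adding any edge between two distinct
non-adjacent vertices destroys outerplanarity. -/
def MaximalOuterplanar {V : Type*} (G : SimpleGraph V) : Prop :=
  Outerplanar G ∧ ∀ x y : V, x ≠ y → ¬ G.Adj x y →
    ¬ Outerplanar (G ⊔ fromEdgeSet {s(x, y)})

/-- The (normalized) graph Laplacian `Δf(v) = (1/d_v) ∑_{u ∈ N(v)} (f u - f v)`. -/
noncomputable def graphLap {V : Type*} (G : SimpleGraph V) [Fintype V] [DecidableRel G.Adj]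
    (f : V → ℤ) (v : V) : ℝ :=
  (∑ u ∈ G.neighborFinset v, ((f u : ℝ) - (f v : ℝ))) / (G.degree v)

/-- The Lin–Lu–Yau curvature of the pair `(x, y)`, via the limit-free Laplacian
formulation: the infimum of `Δf(x) - Δf(y)` over integer-valued functions `f` that are
`1`-Lipschitz w.r.t. the graph distance and satisfy `f y - f x = 1`. -/
noncomputable def llyCurv {V : Type*} (G : SimpleGraph V) [Fintype V] [DecidableRel G.Adj]
    (x y : V) : ℝ :=
  sInf { r : ℝ | ∃ f : V → ℤ,
    (∀ u v : V, |f u - f v| ≤ (G.dist u v : ℤ)) ∧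
    f y - f x = 1 ∧
    r = graphLap G f x - graphLap G f y }

namespace SimpleGraph

variable {V W : Type*} {G : SimpleGraph V} {H : SimpleGraph W} {p q u v : V} {S T : Set V}

section Minors

lemma connected_induce_singleton (a : V) : (G.induce {a}).Connected :=
  (connected_iff _).mpr ⟨Preconnected.of_subsingleton, inferInstance⟩

lemma completeGraph_four_isMinorOf {a b c : V} {C : Set V} (hab : G.Adj a b) (hac : G.Adj a c)
    (hbc : G.Adj b c) (hC : (G.induce C).Connected) (ha : a ∉ C) (hb : b ∉ C) (hc : c ∉ C)
    (hCa : ∃ v ∈ C, G.Adj a v) (hCb : ∃ v ∈ C, G.Adj b v) (hCc : ∃ v ∈ C, G.Adj c v) :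
    (completeGraph (Fin 4)).IsMinorOf G := by
  obtain ⟨va, hva, hava⟩ := hCa
  obtain ⟨vb, hvb, hbvb⟩ := hCb
  obtain ⟨vc, hvc, hcvc⟩ := hCc
  refine ⟨![{a}, {b}, {c}, C], fun i => ?_, fun i j hij => ?_, fun i j hij => ?_⟩
  · fin_cases i <;> first | exact connected_induce_singleton _ | exact hC
  · fin_cases i <;> fin_cases j <;>
      simp_all [hab.ne, hac.ne, hbc.ne, hab.ne.symm, hac.ne.symm, hbc.ne.symm]
  · fin_cases i <;> fin_cases j <;> simp_all [G.adj_comm] <;> grind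

lemma completeBipartiteGraph_two_three_isMinorOf {a b c d : V} {C : Set V} (hab : a ≠ b)
    (hcd : c ≠ d) (hac : G.Adj a c) (had : G.Adj a d) (hbc : G.Adj b c) (hbd : G.Adj b d)
    (hC : (G.induce C).Connected) (ha : a ∉ C) (hb : b ∉ C) (hc : c ∉ C) (hd : d ∉ C)
    (hCa : ∃ v ∈ C, G.Adj a v) (hCb : ∃ v ∈ C, G.Adj b v) :
    (completeBipartiteGraph (Fin 2) (Fin 3)).IsMinorOf G := by
  obtain ⟨va, hva, hava⟩ := hCa
  obtain ⟨vb, hvb, hbvb⟩ := hCb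
  refine ⟨Sum.elim ![{a}, {b}] ![{c}, {d}, C], fun i => ?_, fun i j hij => ?_, fun i j hij => ?_⟩
  · rcases i with i | i <;> fin_cases i <;> first | exact connected_induce_singleton _ | exact hC
  · rcases i with i | i <;> rcases j with j | j <;> fin_cases i <;> fin_cases j <;>
      simp_all [hab.symm, hcd.symm, hac.ne, had.ne, hbc.ne, hbd.ne, hac.ne.symm, had.ne.symm,
        hbc.ne.symm, hbd.ne.symm]
  · rcases i with i | i <;> rcases j with j | j <;> fin_cases i <;> fin_cases j <;>
      simp_all [G.adj_comm] <;> grind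

end Minors

section Bridge

lemma Preconnected.reachable_of_induce (hS : (G.induce S).Preconnected) (hu : u ∈ S)
    (hv : v ∈ S) : G.Reachable u v :=
  (hS ⟨u, hu⟩ ⟨v, hv⟩).map (Embedding.induce S).toHom

lemma Preconnected.reachable_of_induce_of_adj (hS : (G.induce S).Preconnected)
    (hT : (G.induce T).Preconnected) (hST : ∃ a ∈ S, ∃ b ∈ T, G.Adj a b) (hu : u ∈ S)
    (hv : v ∈ T) : G.Reachable u v := by
  obtain ⟨a, ha, b, hb, hab⟩ := hST
  exact (hS.reachable_of_induce hu ha).trans (hab.reachable.trans (hT.reachable_of_induce hb hv))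

lemma Adj.of_sup_edge (h : (G ⊔ edge p q).Adj u v) (hp : u ≠ p) (hq : u ≠ q) : G.Adj u v := by
  simp_all [edge_adj]

lemma induce_sup_edge_eq (h : ¬ (p ∈ S ∧ q ∈ S)) : (G ⊔ edge p q).induce S = G.induce S := by
  ext ⟨a, ha⟩ ⟨b, hb⟩
  change (G ⊔ edge p q).Adj a b ↔ G.Adj a b
  simp only [sup_adj, edge_adj, or_iff_left_iff_imp]
  rintro ⟨⟨rfl, rfl⟩ | ⟨rfl, rfl⟩, -⟩ <;> simp_all

lemma Reachable.of_sup_edge (h : (G ⊔ edge p q).Reachable p v) :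
    G.Reachable p v ∨ G.Reachable q v := by
  rw [reachable_iff_reflTransGen] at h
  induction h with
  | refl => exact .inl .rfl
  | tail _ hab ih =>
    rw [sup_adj, edge_adj] at hab
    rcases hab with hab | ⟨⟨rfl, rfl⟩ | ⟨rfl, rfl⟩, -⟩
    · exact ih.imp (·.trans hab.reachable) (·.trans hab.reachable)
    · exact .inr .rfl
    · exact .inl .rfl

/-- Collapsing everything beyond the bridge `pq` onto `p` retracts `S` onto its part on the
`p`-side, and maps each edge of `G ⊔ edge p q` to an edge of `G` or to a single vertex. -/
lemma connected_induce_inter_reachable (hpq : ¬ G.Reachable p q) (hp : p ∈ S)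
    (hS : ((G ⊔ edge p q).induce S).Preconnected) :
    (G.induce (S ∩ {t | G.Reachable p t})).Connected := by
  classical
  let r : S → ↥(S ∩ {t | G.Reachable p t}) := fun t =>
    if ht : G.Reachable p t then ⟨t, t.2, ht⟩ else ⟨p, hp, .rfl⟩
  have hr : ∀ a b : S, ((G ⊔ edge p q).induce S).Adj a b →
      Relation.ReflTransGen (G.induce (S ∩ {t | G.Reachable p t})).Adj (r a) (r b) := by
    rintro ⟨a, ha⟩ ⟨b, hb⟩ hab
    rw [← reachable_iff_reflTransGen]
    change G.Adj a b ∨ (edge p q).Adj a b at hab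
    rw [edge_adj] at hab
    rcases hab with hab | ⟨⟨rfl, rfl⟩ | ⟨rfl, rfl⟩, -⟩
    · by_cases hpa : G.Reachable p a
      · have hpb : G.Reachable p b := hpa.trans hab.reachable
        simp only [r, dif_pos hpa, dif_pos hpb]
        exact Adj.reachable hab
      · have hpb : ¬ G.Reachable p b := fun h => hpa (h.trans hab.symm.reachable)
        simp only [r, dif_neg hpa, dif_neg hpb, Reachable.rfl]
    all_goals simp only [r, dif_pos Reachable.rfl, dif_neg hpq, Reachable.rfl]
  refine (connected_iff _).mpr ⟨?_, ⟨⟨p, hp, .rfl⟩⟩⟩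
  rintro ⟨a, haS, ha : G.Reachable p a⟩ ⟨b, hbS, hb : G.Reachable p b⟩
  have := Relation.ReflTransGen.lift' r hr _ _
    ((reachable_iff_reflTransGen _ _).mp (hS ⟨a, haS⟩ ⟨b, hbS⟩))
  simp only [Function.onFun, r, dif_pos ha, dif_pos hb] at this
  exact (reachable_iff_reflTransGen _ _).mpr this

variable {B : W → Set V}

lemma isMinorOf_of_sup_edge_of_mem_of_reachable {i₀ : W} (hpq : ¬ G.Reachable p q)
    (hB : ∀ k, ((G ⊔ edge p q).induce (B k)).Connected)
    (hdisj : Pairwise fun k l => Disjoint (B k) (B l))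
    (hG : ∀ ⦃k l⦄, H.Adj k l → k ≠ i₀ → ∃ u ∈ B k, ∃ v ∈ B l, G.Adj u v)
    (hp : p ∈ B i₀) (hside : ∀ k ≠ i₀, ∀ u ∈ B k, G.Reachable p u) : H.IsMinorOf G := by
  classical
  refine ⟨Function.update B i₀ (B i₀ ∩ {t | G.Reachable p t}), fun k => ?_, fun k l hkl => ?_,
    fun k l hkl => ?_⟩
  · rcases eq_or_ne k i₀ with rfl | hk
    · rw [Function.update_self]
      exact connected_induce_inter_reachable hpq hp (hB k).preconnected
    · have hpk : p ∉ B k := fun h => Set.disjoint_left.mp (hdisj hk) h hp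
      rw [Function.update_of_ne hk, ← induce_sup_edge_eq (q := q) (by tauto)]
      exact hB k
  · have hsub : ∀ m, Function.update B i₀ (B i₀ ∩ {t | G.Reachable p t}) m ⊆ B m := by
      intro m
      rcases eq_or_ne m i₀ with rfl | hm
      · simp
      · rw [Function.update_of_ne hm]
    exact (hdisj hkl).mono (hsub k) (hsub l)
  · rcases eq_or_ne k i₀ with rfl | hk
    · obtain ⟨u, hu, v, hv, huv⟩ := hG hkl.symm hkl.ne'
      refine ⟨v, ?_, u, ?_, huv.symm⟩
      · simpa using ⟨hv, (hside l hkl.ne' u hu).trans huv.reachable⟩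
      · simpa [Function.update_of_ne hkl.ne'] using hu
    · obtain ⟨u, hu, v, hv, huv⟩ := hG hkl hk
      refine ⟨u, by simpa [Function.update_of_ne hk] using hu, v, ?_, huv⟩
      rcases eq_or_ne l i₀ with rfl | hl
      · simpa using ⟨hv, (hside k hk u hu).trans huv.reachable⟩
      · simpa [Function.update_of_ne hl] using hv

lemma isMinorOf_of_sup_edge_of_mem {i₀ : W}
    (hdel : ∀ i j k, j ≠ i → k ≠ i → j ≠ k → H.Adj j k ∨ ∃ m, m ≠ i ∧ H.Adj j m ∧ H.Adj m k)
    (hdeg : ∀ i, ∃ j, H.Adj i j) (hpq : ¬ G.Reachable p q)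
    (hB : ∀ k, ((G ⊔ edge p q).induce (B k)).Connected)
    (hdisj : Pairwise fun k l => Disjoint (B k) (B l))
    (hedge : ∀ ⦃k l⦄, H.Adj k l → ∃ u ∈ B k, ∃ v ∈ B l, (G ⊔ edge p q).Adj u v)
    (hp : p ∈ B i₀) (hq : q ∈ B i₀) : H.IsMinorOf G := by
  have hout : ∀ {k u}, k ≠ i₀ → u ∈ B k → u ≠ p ∧ u ≠ q := fun hk hu =>
    ⟨fun h => Set.disjoint_left.mp (hdisj hk) hu (h ▸ hp),
      fun h => Set.disjoint_left.mp (hdisj hk) hu (h ▸ hq)⟩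
  have hBG : ∀ k ≠ i₀, (G.induce (B k)).Preconnected := fun k hk => by
    rw [← induce_sup_edge_eq (p := p) (q := q) fun h => (hout hk h.1).1 rfl]
    exact (hB k).preconnected
  have hG : ∀ ⦃k l⦄, H.Adj k l → k ≠ i₀ → ∃ u ∈ B k, ∃ v ∈ B l, G.Adj u v := by
    intro k l hkl hk
    obtain ⟨u, hu, v, hv, huv⟩ := hedge hkl
    exact ⟨u, hu, v, hv, huv.of_sup_edge (hout hk hu).1 (hout hk hu).2⟩
  obtain ⟨j₀, hj₀⟩ := hdeg i₀
  obtain ⟨u₀, hu₀, v₀, hv₀, huv₀⟩ := hG hj₀.symm hj₀.ne'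
  have hlink : ∀ k ≠ i₀, ∀ u ∈ B k, G.Reachable v₀ u := by
    intro k hk u hu
    refine huv₀.symm.reachable.trans ?_
    rcases eq_or_ne j₀ k with rfl | hjk
    · exact (hBG j₀ hk).reachable_of_induce hu₀ hu
    rcases hdel i₀ j₀ k hj₀.ne' hk hjk with hadj | ⟨m, hm, hjm, hmk⟩
    · exact (hBG j₀ hj₀.ne').reachable_of_induce_of_adj (hBG k hk) (hG hadj hj₀.ne') hu₀ hu
    · obtain ⟨⟨a, ha⟩⟩ := (hB m).nonempty
      exact ((hBG j₀ hj₀.ne').reachable_of_induce_of_adj (hBG m hm) (hG hjm hj₀.ne') hu₀ ha).trans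
        ((hBG m hm).reachable_of_induce_of_adj (hBG k hk) (hG hmk hm) ha hu)
  rcases ((hB i₀).preconnected.reachable_of_induce hp hv₀).of_sup_edge with hpv | hqv
  · exact isMinorOf_of_sup_edge_of_mem_of_reachable hpq hB hdisj hG hp
      fun k hk u hu => hpv.trans (hlink k hk u hu)
  · rw [edge_comm] at hB
    exact isMinorOf_of_sup_edge_of_mem_of_reachable (fun h => hpq h.symm) hB hdisj hG hq
      fun k hk u hu => hqv.trans (hlink k hk u hu)

lemma isMinorOf_of_sup_edge_of_not_mem
    (hcycle : ∀ i j, H.Adj i j → ∃ m n, H.Adj i m ∧ H.Adj m n ∧ H.Adj n j ∧ m ≠ j ∧ n ≠ i)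
    (hpq : ¬ G.Reachable p q) (hB : ∀ k, ((G ⊔ edge p q).induce (B k)).Connected)
    (hdisj : Pairwise fun k l => Disjoint (B k) (B l))
    (hedge : ∀ ⦃k l⦄, H.Adj k l → ∃ u ∈ B k, ∃ v ∈ B l, (G ⊔ edge p q).Adj u v)
    (hsplit : ∀ k, ¬ (p ∈ B k ∧ q ∈ B k)) : H.IsMinorOf G := by
  have huniq : ∀ {t k l}, t ∈ B k → t ∈ B l → k = l := fun hk hl =>
    by_contra fun hkl => Set.disjoint_left.mp (hdisj hkl) hk hl
  have hBG : ∀ k, (G.induce (B k)).Preconnected := fun k => by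
    rw [← induce_sup_edge_eq (hsplit k)]
    exact (hB k).preconnected
  have hbridge : ∀ ⦃i j⦄, H.Adj i j → p ∈ B i → q ∈ B j → False := by
    intro i j hij hp hq
    have hG : ∀ ⦃k l⦄, H.Adj k l → (k = i → l ≠ j) → (k = j → l ≠ i) →
        ∃ u ∈ B k, ∃ v ∈ B l, G.Adj u v := by
      intro k l hkl h₁ h₂
      obtain ⟨u, hu, v, hv, huv | huv⟩ := hedge hkl
      · exact ⟨u, hu, v, hv, huv⟩
      rw [edge_adj] at huv
      rcases huv with ⟨⟨rfl, rfl⟩ | ⟨rfl, rfl⟩, -⟩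
      · exact absurd (huniq hv hq) (h₁ (huniq hu hp))
      · exact absurd (huniq hv hp) (h₂ (huniq hu hq))
    obtain ⟨m, n, him, hmn, hnj, hmj, hni⟩ := hcycle i j hij
    obtain ⟨⟨a, ha⟩⟩ := (hB m).nonempty
    obtain ⟨⟨b, hb⟩⟩ := (hB n).nonempty
    refine hpq (((hBG i).reachable_of_induce_of_adj (hBG m)
      (hG him (fun _ => hmj) fun h => (hij.ne h).elim) hp ha).trans
      (((hBG m).reachable_of_induce_of_adj (hBG n)
        (hG hmn (fun h => (him.ne h.symm).elim) fun h => absurd h hmj) ha hb).trans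
      ((hBG n).reachable_of_induce_of_adj (hBG j)
        (hG hnj (fun h => absurd h hni) fun _ => hij.ne') hb hq)))
  refine ⟨B, fun k => (connected_iff _).mpr ⟨hBG k, (hB k).nonempty⟩, hdisj, fun i j hij => ?_⟩
  obtain ⟨u, hu, v, hv, huv | huv⟩ := hedge hij
  · exact ⟨u, hu, v, hv, huv⟩
  rw [edge_adj] at huv
  rcases huv with ⟨⟨rfl, rfl⟩ | ⟨rfl, rfl⟩, -⟩
  · exact (hbridge hij hu hv).elim
  · exact (hbridge hij.symm hv hu).elim

/-- The hypotheses on `H` are a concrete form of `2`-connectivity, satisfied by `K₄` and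
`K_{2,3}`. -/
theorem IsMinorOf.of_sup_edge
    (hcycle : ∀ i j, H.Adj i j → ∃ m n, H.Adj i m ∧ H.Adj m n ∧ H.Adj n j ∧ m ≠ j ∧ n ≠ i)
    (hdel : ∀ i j k, j ≠ i → k ≠ i → j ≠ k → H.Adj j k ∨ ∃ m, m ≠ i ∧ H.Adj j m ∧ H.Adj m k)
    (hdeg : ∀ i, ∃ j, H.Adj i j) (hpq : ¬ G.Reachable p q) (h : H.IsMinorOf (G ⊔ edge p q)) :
    H.IsMinorOf G := by
  obtain ⟨B, hB, hdisj, hedge⟩ := h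
  by_cases hsplit : ∃ i₀, p ∈ B i₀ ∧ q ∈ B i₀
  · obtain ⟨i₀, hp, hq⟩ := hsplit
    exact isMinorOf_of_sup_edge_of_mem hdel hdeg hpq hB hdisj hedge hp hq
  · exact isMinorOf_of_sup_edge_of_not_mem hcycle hpq hB hdisj hedge (not_exists.mp hsplit)

end Bridge

end SimpleGraph

theorem MaximalOuterplanar.connected {V : Type*} [Nonempty V] {G : SimpleGraph V}
    (hG : MaximalOuterplanar G) : G.Connected := by
  refine (connected_iff _).mpr ⟨fun u v => ?_, ‹_›⟩
  by_contra huv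
  refine hG.2 u v (fun h => huv (h ▸ .rfl)) (fun h => huv h.reachable)
    ⟨fun h => hG.1.1 (h.of_sup_edge ?_ ?_ ?_ huv), fun h => hG.1.2 (h.of_sup_edge ?_ ?_ ?_ huv)⟩
  all_goals first
    | decide
    | simp only [completeBipartiteGraph_adj]; decide

namespace Finset

variable {α : Type*} [DecidableEq α] {s : Finset α} {l : List α}

theorem sum_eq_list_sum_add_sum_sdiff {M : Type*} [AddCommMonoid M] (hl : l.Nodup)
    (hls : ∀ u ∈ l, u ∈ s) (f : α → M) :
    ∑ u ∈ s, f u = (l.map f).sum + ∑ u ∈ s \ l.toFinset, f u := by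
  rw [← sum_sdiff (fun u hu => hls u (List.mem_toFinset.mp hu)), List.sum_toFinset _ hl, add_comm]

theorem intCast_card_sdiff_toFinset (hl : l.Nodup) (hls : ∀ u ∈ l, u ∈ s) :
    (#(s \ l.toFinset) : ℤ) = #s - l.length := by
  have hsub : l.toFinset ⊆ s := fun u hu => hls u (List.mem_toFinset.mp hu)
  have hle := card_le_card hsub
  rw [List.toFinset_card_of_nodup hl] at hle
  rw [card_sdiff_of_subset hsub, List.toFinset_card_of_nodup hl, Nat.cast_sub hle]

theorem sum_le_list_sum_add_mul (hl : l.Nodup) (hls : ∀ u ∈ l, u ∈ s) {f : α → ℤ} {b : ℤ}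
    (hb : ∀ u ∈ s, u ∉ l → f u ≤ b) : ∑ u ∈ s, f u ≤ (l.map f).sum + (#s - l.length) * b := by
  have := sum_le_card_nsmul (s \ l.toFinset) f b fun u hu => by
    simp only [mem_sdiff, List.mem_toFinset] at hu
    exact hb u hu.1 hu.2
  rw [nsmul_eq_mul, intCast_card_sdiff_toFinset hl hls] at this
  rw [sum_eq_list_sum_add_sum_sdiff hl hls]
  linarith

theorem list_sum_add_mul_le_sum (hl : l.Nodup) (hls : ∀ u ∈ l, u ∈ s) {f : α → ℤ} {b : ℤ}
    (hb : ∀ u ∈ s, u ∉ l → b ≤ f u) : (l.map f).sum + (#s - l.length) * b ≤ ∑ u ∈ s, f u := by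
  have := card_nsmul_le_sum (s \ l.toFinset) f b fun u hu => by
    simp only [mem_sdiff, List.mem_toFinset] at hu
    exact hb u hu.1 hu.2
  rw [nsmul_eq_mul, intCast_card_sdiff_toFinset hl hls] at this
  rw [sum_eq_list_sum_add_sum_sdiff hl hls]
  linarith

end Finset

lemma graphLap_eq_intCast_sum_div {V : Type*} (G : SimpleGraph V) [Fintype V] [DecidableRel G.Adj]
    (f : V → ℤ) (v : V) :
    graphLap G f v = ((∑ u ∈ G.neighborFinset v, (f u - f v) : ℤ) : ℝ) / G.degree v := by
  simp [graphLap]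

lemma llyCurv_eq_of_forall_le {V : Type*} {G : SimpleGraph V} [Fintype V] [DecidableRel G.Adj]
    {x y : V} {r : ℝ} (hlow : ∀ g : V → ℤ, (∀ u v, |g u - g v| ≤ (G.dist u v : ℤ)) →
      g y - g x = 1 → r ≤ graphLap G g x - graphLap G g y)
    (f : V → ℤ) (hf : ∀ u v, |f u - f v| ≤ (G.dist u v : ℤ)) (hfxy : f y - f x = 1)
    (hfr : graphLap G f x - graphLap G f y ≤ r) : llyCurv G x y = r := by
  unfold llyCurv
  have hr : ∀ s, (∃ g : V → ℤ, (∀ u v, |g u - g v| ≤ (G.dist u v : ℤ)) ∧ g y - g x = 1 ∧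
      s = graphLap G g x - graphLap G g y) → r ≤ s := fun _ ⟨g, hg, hgxy, h⟩ => h ▸ hlow g hg hgxy
  refine le_antisymm ?_ (le_csInf ⟨_, f, hf, hfxy, rfl⟩ hr)
  exact (csInf_le ⟨r, hr⟩ ⟨f, hf, hfxy, rfl⟩).trans hfr

/-- The lower bound for `Δg(x) - Δg(y)` when `g w - g x = a` and `g z - g x = b`, where `m` and
`n` are the degrees of `x` and `y`. -/
noncomputable def curvatureBound (m n : ℕ) (a b : ℤ) : ℝ :=
  ((a + 2 * b + 4 - m : ℤ) : ℝ) / m - ((2 * a + 2 * b + n - 8 : ℤ) : ℝ) / n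

lemma curvatureBound_le {m n : ℕ} (hm : 0 < m) (hmn : m ≤ n) {A a b : ℤ}
    (hA : A = 1 ∧ n ≤ 2 * m ∨ A = 0 ∧ 2 * m ≤ n) (ha₀ : 0 ≤ a) (ha₁ : a ≤ 1) (hb₀ : 0 ≤ b)
    (hb₁ : b ≤ 1) : curvatureBound m n A 0 ≤ curvatureBound m n a b := by
  have key : 2 * (a + b - A) * m ≤ (a + 2 * b - A) * n := by
    rcases hA with ⟨rfl, h⟩ | ⟨rfl, h⟩ <;> interval_cases a <;> interval_cases b <;> omega
  have hm' : (0 : ℝ) < m := by exact_mod_cast hm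
  have hn' : (0 : ℝ) < n := by exact_mod_cast hm.trans_le hmn
  rw [curvatureBound, curvatureBound, div_sub_div _ _ hm'.ne' hn'.ne',
    div_sub_div _ _ hm'.ne' hn'.ne',
    div_le_div_iff_of_pos_right (by positivity)]
  have : (2 * (a + b - A) * m : ℝ) ≤ (a + 2 * b - A) * n := by exact_mod_cast key
  push_cast
  linarith

namespace SimpleGraph

variable {V : Type*} {G : SimpleGraph V} {u v : V}

lemma eq_of_ncard_neighborSet_inter_diff_eq_zero [Finite V] {a b c : V}
    (h : ((G.neighborSet a ∩ G.neighborSet b) \ {c}).ncard = 0) :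
    ∀ v, G.Adj a v → G.Adj b v → v = c := by
  rw [Set.ncard_eq_zero] at h
  intro v hav hbv
  by_contra hvc
  exact h.subset ⟨⟨hav, hbv⟩, hvc⟩

lemma exists_of_ncard_neighborSet_inter_diff_eq_one {a b c : V}
    (h : ((G.neighborSet a ∩ G.neighborSet b) \ {c}).ncard = 1) :
    ∃ d, G.Adj a d ∧ G.Adj b d ∧ d ≠ c ∧ ∀ v, G.Adj a v → G.Adj b v → v = c ∨ v = d := by
  obtain ⟨d, hd⟩ := Set.ncard_eq_one.mp h
  have hmem : ∀ v, (G.Adj a v ∧ G.Adj b v) ∧ v ≠ c ↔ v = d := fun v => by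
    simpa using Set.ext_iff.mp hd v
  obtain ⟨⟨had, hbd⟩, hdc⟩ := (hmem d).mpr rfl
  exact ⟨d, had, hbd, hdc, fun v hav hbv => or_iff_not_imp_left.mpr fun hvc =>
    (hmem v).mp ⟨⟨hav, hbv⟩, hvc⟩⟩

lemma abs_sub_le_one_of_adj {g : V → ℤ} (hg : ∀ u v, |g u - g v| ≤ (G.dist u v : ℤ))
    (h : G.Adj u v) : |g u - g v| ≤ 1 := by
  simpa [dist_eq_one_iff_adj.mpr h] using hg u v

lemma Connected.three_le_dist (hG : G.Connected) (hne : u ≠ v) (hadj : ¬ G.Adj u v)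
    (hcommon : ∀ t, G.Adj u t → ¬ G.Adj t v) : 3 ≤ G.dist u v := by
  have h := two_lt_edist_iff.mpr ⟨hne, hadj, Set.eq_empty_iff_forall_notMem.mpr fun t ht =>
    hcommon t ht.1 (G.adj_symm ht.2)⟩
  rw [← (hG u v).coe_dist_eq_edist] at h
  exact_mod_cast h

noncomputable def mcShane (G : SimpleGraph V) (T : Finset V) (hT : T.Nonempty) (c : V → ℤ)
    (v : V) : ℤ :=
  T.inf' hT fun t => G.dist v t + c t

section McShane

variable {T : Finset V} {hT : T.Nonempty} {c : V → ℤ} {t v : V} {b : ℤ}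

lemma mcShane_le (ht : t ∈ T) : G.mcShane T hT c v ≤ G.dist v t + c t :=
  Finset.inf'_le _ ht

lemma le_mcShane (h : ∀ t ∈ T, b ≤ G.dist v t + c t) : b ≤ G.mcShane T hT c v :=
  Finset.le_inf' _ _ h

lemma abs_mcShane_sub_le (hG : G.Connected) (u v : V) :
    |G.mcShane T hT c u - G.mcShane T hT c v| ≤ G.dist u v := by
  have key : ∀ u v, G.mcShane T hT c u ≤ G.mcShane T hT c v + G.dist u v := by
    intro u v
    obtain ⟨t, ht, hvt⟩ := Finset.exists_mem_eq_inf' hT fun t => (G.dist v t : ℤ) + c t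
    have := hG.dist_triangle (u := u) (v := v) (w := t)
    calc G.mcShane T hT c u ≤ G.dist u t + c t := mcShane_le ht
      _ ≤ _ := by rw [mcShane, hvt]; omega
  rw [abs_sub_le_iff]
  refine ⟨by linarith [key u v], ?_⟩
  rw [dist_comm]
  linarith [key v u]

end McShane

/-- The neighbourhood of the edge `xy` in the theorem; `z'`, `w'` and `z''` are the common
neighbours counted by `δ_xz = δ_yw = δ_yz = 1`. -/
structure EdgeConfig (G : SimpleGraph V) (x y w z z' w' z'' : V) : Prop where
  adj_xy : G.Adj x y
  adj_xw : G.Adj x w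
  adj_xz : G.Adj x z
  adj_yw : G.Adj y w
  adj_yz : G.Adj y z
  adj_xz' : G.Adj x z'
  adj_zz' : G.Adj z z'
  adj_yw' : G.Adj y w'
  adj_ww' : G.Adj w w'
  adj_yz'' : G.Adj y z''
  adj_zz'' : G.Adj z z''
  w_ne_z : w ≠ z
  z'_ne_y : z' ≠ y
  w'_ne_x : w' ≠ x
  z''_ne_x : z'' ≠ x
  eq_of_adj_xy : ∀ v, G.Adj x v → G.Adj y v → v = w ∨ v = z
  eq_of_adj_xw : ∀ v, G.Adj x v → G.Adj w v → v = y
  eq_of_adj_yw : ∀ v, G.Adj y v → G.Adj w v → v = x ∨ v = w'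
  eq_of_adj_yz : ∀ v, G.Adj y v → G.Adj z v → v = x ∨ v = z''

lemma exists_edgeConfig [Finite V] {x y w z : V} (hxy : G.Adj x y) (hwz : w ≠ z)
    (hcom : G.neighborSet x ∩ G.neighborSet y = {w, z})
    (hxw : ((G.neighborSet x ∩ G.neighborSet w) \ {y}).ncard = 0)
    (hxz : ((G.neighborSet x ∩ G.neighborSet z) \ {y}).ncard = 1)
    (hyw : ((G.neighborSet y ∩ G.neighborSet w) \ {x}).ncard = 1)
    (hyz : ((G.neighborSet y ∩ G.neighborSet z) \ {x}).ncard = 1) :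
    ∃ z' w' z'', EdgeConfig G x y w z z' w' z'' := by
  have hmem : ∀ v, G.Adj x v ∧ G.Adj y v ↔ v = w ∨ v = z := fun v => by
    simpa using Set.ext_iff.mp hcom v
  obtain ⟨z', hxz', hzz', hz'y, -⟩ := exists_of_ncard_neighborSet_inter_diff_eq_one hxz
  obtain ⟨w', hyw', hww', hw'x, hw'⟩ := exists_of_ncard_neighborSet_inter_diff_eq_one hyw
  obtain ⟨z'', hyz'', hzz'', hz''x, hz''⟩ := exists_of_ncard_neighborSet_inter_diff_eq_one hyz
  exact ⟨z', w', z'',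
    { adj_xy := hxy
      adj_xw := ((hmem w).mpr (.inl rfl)).1
      adj_xz := ((hmem z).mpr (.inr rfl)).1
      adj_yw := ((hmem w).mpr (.inl rfl)).2
      adj_yz := ((hmem z).mpr (.inr rfl)).2
      adj_xz' := hxz'
      adj_zz' := hzz'
      adj_yw' := hyw'
      adj_ww' := hww'
      adj_yz'' := hyz''
      adj_zz'' := hzz''
      w_ne_z := hwz
      z'_ne_y := hz'y
      w'_ne_x := hw'x
      z''_ne_x := hz''x
      eq_of_adj_xy := fun v hx hy => (hmem v).mp ⟨hx, hy⟩
      eq_of_adj_xw := eq_of_ncard_neighborSet_inter_diff_eq_zero hxw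
      eq_of_adj_yw := hw'
      eq_of_adj_yz := hz'' }⟩

namespace EdgeConfig

variable {x y w z z' w' z'' : V}

lemma not_adj_wz (hC : EdgeConfig G x y w z z' w' z'') : ¬ G.Adj w z := fun h =>
  hC.adj_yz.ne' (hC.eq_of_adj_xw z hC.adj_xz h)

lemma w'_ne_z (hC : EdgeConfig G x y w z z' w' z'') : w' ≠ z := fun h =>
  hC.not_adj_wz (h ▸ hC.adj_ww')

lemma z''_ne_w (hC : EdgeConfig G x y w z z' w' z'') : z'' ≠ w := fun h =>
  hC.not_adj_wz (h ▸ hC.adj_zz''.symm)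

lemma not_adj_y (hC : EdgeConfig G x y w z z' w' z'') {t : V} (hxt : G.Adj x t) (htw : t ≠ w)
    (htz : t ≠ z) : ¬ G.Adj y t := fun h => by
  rcases hC.eq_of_adj_xy t hxt h with h | h <;> contradiction

lemma w'_ne_z'' (hC : EdgeConfig G x y w z z' w' z'') (hO : Outerplanar G) : w' ≠ z'' := by
  rintro rfl
  refine hO.2 (completeBipartiteGraph_two_three_isMinorOf hC.w_ne_z hC.adj_xy.ne
    hC.adj_xw.symm hC.adj_yw.symm hC.adj_xz.symm hC.adj_yz.symm (connected_induce_singleton w')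
    hC.adj_ww'.ne hC.adj_zz''.ne hC.w'_ne_x.symm hC.adj_yw'.ne ⟨w', rfl, hC.adj_ww'⟩
    ⟨w', rfl, hC.adj_zz''⟩)

lemma not_adj_z'' (hC : EdgeConfig G x y w z z' w' z'') (hO : Outerplanar G) {u : V}
    (hxu : G.Adj x u) (huy : u ≠ y) (huz : u ≠ z) : ¬ G.Adj u z'' := fun h =>
  hO.1 (completeGraph_four_isMinorOf hC.adj_xy hC.adj_xz hC.adj_yz (induce_pair_connected_of_adj h)
    (by simp [hxu.ne, hC.z''_ne_x.symm]) (by simp [huy.symm, hC.adj_yz''.ne])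
    (by simp [huz.symm, hC.adj_zz''.ne]) ⟨u, by simp, hxu⟩ ⟨z'', by simp, hC.adj_yz''⟩
    ⟨z'', by simp, hC.adj_zz''⟩)

/-- A short path from `N(x)` to `N(y)` avoiding `x, y, w, z` would give a `K_{2,3}` minor with
parts `{x, y}` and `{w}, {z}, path`. -/
lemma three_le_dist (hC : EdgeConfig G x y w z z' w' z'') (hO : Outerplanar G) (hG : G.Connected)
    {u u' : V} (hxu : G.Adj x u) (huy : u ≠ y) (huw : u ≠ w) (huz : u ≠ z) (hyu' : G.Adj y u')
    (hu'x : u' ≠ x) (hu'w : u' ≠ w) (hu'z : u' ≠ z) (hu'z'' : u' ≠ z'') : 3 ≤ G.dist u u' := by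
  have hK23 : ∀ {C : Set V}, (G.induce C).Connected → x ∉ C → y ∉ C → w ∉ C → z ∉ C →
      u ∈ C → u' ∈ C → False := fun hC' hx hy hw hz hu hu' =>
    hO.2 (completeBipartiteGraph_two_three_isMinorOf hC.adj_xy.ne hC.w_ne_z hC.adj_xw hC.adj_xz
      hC.adj_yw hC.adj_yz hC' hx hy hw hz ⟨u, hu, hxu⟩ ⟨u', hu', hyu'⟩)
  have hux : u ≠ x := hxu.ne'
  have hu'y : u' ≠ y := hyu'.ne'
  refine hG.three_le_dist (fun h => ?_) (fun h => ?_) fun t hut htu' => ?_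
  · subst h
    rcases hC.eq_of_adj_xy u hxu hyu' with h | h <;> contradiction
  · exact hK23 (induce_pair_connected_of_adj h) (by simp [hux.symm, hu'x.symm])
      (by simp [huy.symm, hu'y.symm]) (by simp [huw.symm, hu'w.symm])
      (by simp [huz.symm, hu'z.symm]) (by simp) (by simp)
  · have htx : t ≠ x := by
      rintro rfl
      rcases hC.eq_of_adj_xy u' htu' hyu' with h | h <;> contradiction
    have hty : t ≠ y := by
      rintro rfl
      rcases hC.eq_of_adj_xy u hxu hut.symm with h | h <;> contradiction
    have htw : t ≠ w := by
      rintro rfl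
      exact huy (hC.eq_of_adj_xw u hxu hut.symm)
    have htz : t ≠ z := by
      rintro rfl
      rcases hC.eq_of_adj_yz u' hyu' htu' with h | h <;> contradiction
    exact hK23 (induce_union_connected (induce_pair_connected_of_adj hut).preconnected
        (induce_pair_connected_of_adj htu').preconnected ⟨t, by simp⟩)
      (by simp [hux.symm, htx.symm, hu'x.symm]) (by simp [huy.symm, hty.symm, hu'y.symm])
      (by simp [huw.symm, htw.symm, hu'w.symm]) (by simp [huz.symm, htz.symm, hu'z.symm])
      (by simp) (by simp)

lemma nodup_nbrs_y (hC : EdgeConfig G x y w z z' w' z'') (hO : Outerplanar G) :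
    [x, w, z, w', z''].Nodup := by
  simp [hC.adj_xw.ne, hC.adj_xz.ne, hC.w'_ne_x.symm, hC.z''_ne_x.symm, hC.w_ne_z, hC.adj_ww'.ne,
    hC.z''_ne_w.symm, hC.w'_ne_z.symm, hC.adj_zz''.ne, hC.w'_ne_z'' hO]

lemma adj_y_of_mem (hC : EdgeConfig G x y w z z' w' z'') : ∀ u ∈ [x, w, z, w', z''], G.Adj y u := by
  simp [hC.adj_xy.symm, hC.adj_yw, hC.adj_yz, hC.adj_yw', hC.adj_yz'']

end EdgeConfig

def testCost [DecidableEq V] (x y w z : V) (a : ℤ) (t : V) : ℤ :=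
  if t = x ∨ t = z then 0 else if t = y then 1 else if t = w then a else -1

noncomputable def testFunction (G : SimpleGraph V) [Fintype V] [DecidableEq V] [DecidableRel G.Adj]
    (x y w z : V) (a : ℤ) : V → ℤ :=
  G.mcShane (insert x (G.neighborFinset x)) (Finset.insert_nonempty _ _) (testCost x y w z a)

section Curvature

variable [Fintype V] [DecidableEq V] [DecidableRel G.Adj] {x y w z z' w' z'' : V} {a : ℤ}
  {g : V → ℤ}

lemma testFunction_le {t : V} (ht : t = x ∨ G.Adj x t) :
    G.testFunction x y w z a t ≤ testCost x y w z a t := by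
  have := mcShane_le (G := G) (hT := Finset.insert_nonempty x (G.neighborFinset x))
    (c := testCost x y w z a) (v := t) (by simpa using ht)
  simpa [testFunction] using this

namespace EdgeConfig

lemma le_testFunction (hC : EdgeConfig G x y w z z' w' z'') {v : V} {b : ℤ}
    (hx : b ≤ G.dist v x) (hy : b ≤ G.dist v y + 1) (hw : b ≤ G.dist v w + a)
    (hz : b ≤ G.dist v z) (hN : ∀ t, G.Adj x t → t ≠ y → t ≠ w → t ≠ z → b ≤ G.dist v t - 1) :
    b ≤ G.testFunction x y w z a v := by
  refine le_mcShane fun t ht => ?_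
  rw [Finset.mem_insert, mem_neighborFinset] at ht
  rcases ht with rfl | hxt
  · simpa [testCost] using hx
  have htx : t ≠ x := hxt.ne'
  by_cases hty : t = y
  · subst hty; simpa [testCost, htx, hC.adj_yz.ne] using hy
  by_cases htw : t = w
  · subst htw; simpa [testCost, htx, hty, hC.w_ne_z] using hw
  by_cases htz : t = z
  · subst htz; simpa [testCost] using hz
  simp only [testCost, htx, htz, hty, htw, or_self, if_false]
  linarith [hN t hxt hty htw htz]

lemma testFunction_x (hC : EdgeConfig G x y w z z' w' z'') (ha : 0 ≤ a) :
    G.testFunction x y w z a x = 0 := by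
  have hle : G.testFunction x y w z a x ≤ testCost x y w z a x := testFunction_le (.inl rfl)
  refine le_antisymm (by simpa [testCost] using hle)
    (hC.le_testFunction (by simp) (by omega) (by omega) (by omega) fun t hxt _ _ _ => ?_)
  rw [dist_eq_one_iff_adj.mpr hxt]
  simp

lemma testFunction_y (hC : EdgeConfig G x y w z z' w' z'') (hG : G.Connected) (ha : 0 ≤ a) :
    G.testFunction x y w z a y = 1 := by
  have hle : G.testFunction x y w z a y ≤ testCost x y w z a y := testFunction_le (.inr hC.adj_xy)
  refine le_antisymm (by simpa [testCost, hC.adj_xy.ne', hC.adj_yz.ne] using hle) ?_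
  have hyx := dist_eq_one_iff_adj.mpr hC.adj_xy.symm
  have hyw := dist_eq_one_iff_adj.mpr hC.adj_yw
  have hyz := dist_eq_one_iff_adj.mpr hC.adj_yz
  refine hC.le_testFunction (by omega) (by omega) (by omega) (by omega) fun t hxt hty htw htz => ?_
  have := hG.one_lt_dist_of_ne_of_not_adj (Ne.symm hty) (hC.not_adj_y hxt htw htz)
  omega

lemma le_testFunction_w (hC : EdgeConfig G x y w z z' w' z'') (hG : G.Connected) (ha : a ≤ 1) :
    a ≤ G.testFunction x y w z a w := by
  have hwx := dist_eq_one_iff_adj.mpr hC.adj_xw.symm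
  have hwz := hG.one_lt_dist_of_ne_of_not_adj hC.w_ne_z hC.not_adj_wz
  refine hC.le_testFunction (by omega) (by omega) (by simp) (by omega) fun t hxt hty htw _ => ?_
  have := hG.one_lt_dist_of_ne_of_not_adj (Ne.symm htw) fun h => hty (hC.eq_of_adj_xw t hxt h)
  omega

lemma le_testFunction_z (hC : EdgeConfig G x y w z z' w' z'') (hG : G.Connected) (ha : 0 ≤ a) :
    0 ≤ G.testFunction x y w z a z := by
  refine hC.le_testFunction (by omega) (by omega) (by omega) (by simp) fun t _ _ _ htz => ?_
  have := hG.pos_dist_of_ne (Ne.symm htz)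
  omega

lemma le_testFunction_w' (hC : EdgeConfig G x y w z z' w' z'') (hO : Outerplanar G)
    (hG : G.Connected) (ha : a ≤ 1) : a + 1 ≤ G.testFunction x y w z a w' := by
  have hw'w : w' ≠ w := hC.adj_ww'.ne'
  have hw'z'' := hC.w'_ne_z'' hO
  have dw'x := hG.one_lt_dist_of_ne_of_not_adj hC.w'_ne_x fun h =>
    hC.not_adj_y h.symm hw'w hC.w'_ne_z hC.adj_yw'
  have dw'z := hG.one_lt_dist_of_ne_of_not_adj hC.w'_ne_z fun h => by
    rcases hC.eq_of_adj_yz w' hC.adj_yw' h.symm with h | h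
    exacts [hC.w'_ne_x h, hw'z'' h]
  have dw'y := dist_eq_one_iff_adj.mpr hC.adj_yw'.symm
  have dw'w := dist_eq_one_iff_adj.mpr hC.adj_ww'.symm
  refine hC.le_testFunction (by omega) (by omega) (by omega) (by omega) fun t hxt hty htw htz => ?_
  have := hC.three_le_dist hO hG hxt hty htw htz hC.adj_yw' hC.w'_ne_x hw'w hC.w'_ne_z hw'z''
  rw [dist_comm]
  omega

lemma le_testFunction_z'' (hC : EdgeConfig G x y w z z' w' z'') (hO : Outerplanar G)
    (hG : G.Connected) (ha : 0 ≤ a) : 1 ≤ G.testFunction x y w z a z'' := by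
  have hxz'' : ¬ G.Adj x z'' := fun h => hC.not_adj_y h hC.z''_ne_w hC.adj_zz''.ne' hC.adj_yz''
  have dz''x := hG.one_lt_dist_of_ne_of_not_adj hC.z''_ne_x fun h => hxz'' h.symm
  have dz''w := hG.pos_dist_of_ne hC.z''_ne_w
  have dz''z := dist_eq_one_iff_adj.mpr hC.adj_zz''.symm
  refine hC.le_testFunction (by omega) (by omega) (by omega) (by omega) fun t hxt hty _ htz => ?_
  have := hG.one_lt_dist_of_ne_of_not_adj (fun h : z'' = t => hxz'' (h ▸ hxt))
    fun h => hC.not_adj_z'' hO hxt hty htz h.symm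
  omega

lemma le_testFunction_of_adj_y (hC : EdgeConfig G x y w z z' w' z'') (hO : Outerplanar G)
    (hG : G.Connected) (ha : 0 ≤ a) {u : V} (hyu : G.Adj y u) (hux : u ≠ x) (huw : u ≠ w)
    (huz : u ≠ z) (huw' : u ≠ w') (huz'' : u ≠ z'') : 2 ≤ G.testFunction x y w z a u := by
  have dux := hG.one_lt_dist_of_ne_of_not_adj hux fun h => hC.not_adj_y h.symm huw huz hyu
  have duy := dist_eq_one_iff_adj.mpr hyu.symm
  have duw := hG.one_lt_dist_of_ne_of_not_adj huw fun h => by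
    rcases hC.eq_of_adj_yw u hyu h.symm with h | h <;> contradiction
  have duz := hG.one_lt_dist_of_ne_of_not_adj huz fun h => by
    rcases hC.eq_of_adj_yz u hyu h.symm with h | h <;> contradiction
  refine hC.le_testFunction (by omega) (by omega) (by omega) (by omega) fun t hxt hty htw htz => ?_
  have := hC.three_le_dist hO hG hxt hty htw htz hyu hux huw huz huz''
  rw [dist_comm]
  omega

lemma sum_testFunction_x_le (hC : EdgeConfig G x y w z z' w' z'') (hG : G.Connected)
    (ha : 0 ≤ a) :
    ∑ u ∈ G.neighborFinset x, (G.testFunction x y w z a u - G.testFunction x y w z a x) ≤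
      a + 4 - G.degree x := by
  have hx := hC.testFunction_x ha
  have hy := hC.testFunction_y hG ha
  set f := G.testFunction x y w z a
  have hle : ∀ u, G.Adj x u → f u ≤ testCost x y w z a u := fun u hxu => testFunction_le (.inr hxu)
  have hw := hle w hC.adj_xw
  have hz := hle z hC.adj_xz
  simp only [testCost, hC.adj_xw.ne', hC.w_ne_z, hC.adj_yw.ne', or_self, or_true, if_false,
    if_true] at hw hz
  have := Finset.sum_le_list_sum_add_mul (s := G.neighborFinset x) (l := [y, w, z])
    (f := fun u => f u - f x) (b := -1) (by simp [hC.adj_yw.ne, hC.adj_yz.ne, hC.w_ne_z])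
    (by simp [hC.adj_xy, hC.adj_xw, hC.adj_xz]) fun u hxu hu => by
      simp only [List.mem_cons, List.not_mem_nil, or_false, not_or] at hu
      have hxu := (mem_neighborFinset _ _ _).mp hxu
      have := hle u hxu
      simp only [testCost, hxu.ne', hu.1, hu.2.1, hu.2.2, or_self, if_false] at this
      linarith
  simp only [List.map_cons, List.map_nil, List.sum_cons, List.sum_nil, List.length_cons,
    List.length_nil, card_neighborFinset_eq_degree] at this
  push_cast at this
  linarith

lemma le_sum_testFunction_y (hC : EdgeConfig G x y w z z' w' z'') (hO : Outerplanar G)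
    (hG : G.Connected) (ha₀ : 0 ≤ a) (ha₁ : a ≤ 1) :
    2 * a + G.degree y - 8 ≤
      ∑ u ∈ G.neighborFinset y, (G.testFunction x y w z a u - G.testFunction x y w z a y) := by
  have hx := hC.testFunction_x ha₀
  have hy := hC.testFunction_y hG ha₀
  have hw := hC.le_testFunction_w hG ha₁
  have hz := hC.le_testFunction_z hG ha₀
  have hw' := hC.le_testFunction_w' hO hG ha₁
  have hz'' := hC.le_testFunction_z'' hO hG ha₀
  set f := G.testFunction x y w z a
  have := Finset.list_sum_add_mul_le_sum (s := G.neighborFinset y) (l := [x, w, z, w', z''])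
    (f := fun u => f u - f y) (b := 1) (hC.nodup_nbrs_y hO)
    (fun u hu => (mem_neighborFinset _ _ _).mpr (hC.adj_y_of_mem u hu)) fun u hyu hu => by
      simp only [List.mem_cons, List.not_mem_nil, or_false, not_or] at hu
      have := hC.le_testFunction_of_adj_y hO hG ha₀ ((mem_neighborFinset _ _ _).mp hyu) hu.1
        hu.2.1 hu.2.2.1 hu.2.2.2.1 hu.2.2.2.2
      linarith
  simp only [List.map_cons, List.map_nil, List.sum_cons, List.sum_nil, List.length_cons,
    List.length_nil, card_neighborFinset_eq_degree] at this
  push_cast at this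
  linarith

lemma le_sum_x_of_lipschitz (hC : EdgeConfig G x y w z z' w' z'')
    (hg : ∀ u v, |g u - g v| ≤ (G.dist u v : ℤ)) (hgxy : g y - g x = 1) :
    (g w - g x) + 2 * (g z - g x) + 4 - G.degree x ≤ ∑ u ∈ G.neighborFinset x, (g u - g x) := by
  have hz' := abs_le.mp (abs_sub_le_one_of_adj hg hC.adj_zz')
  have hz'w : z' ≠ w := fun h => hC.not_adj_wz (h ▸ hC.adj_zz'.symm)
  have := Finset.list_sum_add_mul_le_sum (s := G.neighborFinset x) (l := [y, w, z, z'])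
    (f := fun u => g u - g x) (b := -1)
    (by simp [hC.adj_yw.ne, hC.adj_yz.ne, hC.z'_ne_y.symm, hC.w_ne_z, hz'w.symm, hC.adj_zz'.ne])
    (by simp [hC.adj_xy, hC.adj_xw, hC.adj_xz, hC.adj_xz']) fun u hxu _ => by
      have := abs_le.mp (abs_sub_le_one_of_adj hg ((mem_neighborFinset _ _ _).mp hxu).symm)
      linarith
  simp only [List.map_cons, List.map_nil, List.sum_cons, List.sum_nil, List.length_cons,
    List.length_nil, card_neighborFinset_eq_degree] at this
  push_cast at this
  linarith

lemma sum_y_le_of_lipschitz (hC : EdgeConfig G x y w z z' w' z'') (hO : Outerplanar G)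
    (hg : ∀ u v, |g u - g v| ≤ (G.dist u v : ℤ)) (hgxy : g y - g x = 1) :
    ∑ u ∈ G.neighborFinset y, (g u - g y) ≤ 2 * (g w - g x) + 2 * (g z - g x) + G.degree y - 8 := by
  have hw' := abs_le.mp (abs_sub_le_one_of_adj hg hC.adj_ww'.symm)
  have hz'' := abs_le.mp (abs_sub_le_one_of_adj hg hC.adj_zz''.symm)
  have := Finset.sum_le_list_sum_add_mul (s := G.neighborFinset y) (l := [x, w, z, w', z''])
    (f := fun u => g u - g y) (b := 1) (hC.nodup_nbrs_y hO)
    (fun u hu => (mem_neighborFinset _ _ _).mpr (hC.adj_y_of_mem u hu)) fun u hyu _ => by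
      have := abs_le.mp (abs_sub_le_one_of_adj hg ((mem_neighborFinset _ _ _).mp hyu).symm)
      linarith
  simp only [List.map_cons, List.map_nil, List.sum_cons, List.sum_nil, List.length_cons,
    List.length_nil, card_neighborFinset_eq_degree] at this
  push_cast at this
  linarith

theorem llyCurv_eq (hC : EdgeConfig G x y w z z' w' z'') (hO : Outerplanar G)
    (hG : G.Connected) (hd : G.degree x ≤ G.degree y) {A : ℤ}
    (hA : A = 1 ∧ G.degree y ≤ 2 * G.degree x ∨ A = 0 ∧ 2 * G.degree x ≤ G.degree y) :
    llyCurv G x y = curvatureBound (G.degree x) (G.degree y) A 0 := by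
  have hA₀ : 0 ≤ A := by omega
  have hA₁ : A ≤ 1 := by omega
  have hdx : (0 : ℝ) < G.degree x := by exact_mod_cast hC.adj_xy.degree_pos_left
  have hdy : (0 : ℝ) < G.degree y := by exact_mod_cast hC.adj_xy.degree_pos_right
  refine llyCurv_eq_of_forall_le (fun g hg hgxy => ?_) (G.testFunction x y w z A)
    (abs_mcShane_sub_le hG) (by rw [hC.testFunction_y hG hA₀, hC.testFunction_x hA₀]; rfl) ?_
  · have hw₁ := abs_le.mp (abs_sub_le_one_of_adj hg hC.adj_xw.symm)
    have hw₂ := abs_le.mp (abs_sub_le_one_of_adj hg hC.adj_yw.symm)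
    have hz₁ := abs_le.mp (abs_sub_le_one_of_adj hg hC.adj_xz.symm)
    have hz₂ := abs_le.mp (abs_sub_le_one_of_adj hg hC.adj_yz.symm)
    refine (curvatureBound_le hC.adj_xy.degree_pos_left hd hA (a := g w - g x) (b := g z - g x)
      (by omega) (by omega) (by omega) (by omega)).trans ?_
    rw [curvatureBound, graphLap_eq_intCast_sum_div, graphLap_eq_intCast_sum_div]
    exact sub_le_sub
      (div_le_div_of_nonneg_right (by exact_mod_cast hC.le_sum_x_of_lipschitz hg hgxy) hdx.le)
      (div_le_div_of_nonneg_right (by exact_mod_cast hC.sum_y_le_of_lipschitz hO hg hgxy) hdy.le)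
  · rw [curvatureBound, graphLap_eq_intCast_sum_div, graphLap_eq_intCast_sum_div]
    exact sub_le_sub
      (div_le_div_of_nonneg_right
        (Int.cast_le.mpr (by simpa using hC.sum_testFunction_x_le hG hA₀)) hdx.le)
      (div_le_div_of_nonneg_right
        (Int.cast_le.mpr (by simpa using hC.le_sum_testFunction_y hO hG hA₀ hA₁)) hdy.le)

end EdgeConfig

end Curvature

end SimpleGraph

/-- interior edge `xy` with common neighbors `w ≠ z`, where
`δ_xw = 0`, `δ_xz = 1`, `δ_yw = 1`, `δ_yz = 1`. -/
theorem interior_config_14 {V : Type*} [Fintype V]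
    (G : SimpleGraph V) [DecidableRel G.Adj]
    (hmax : MaximalOuterplanar G)
    (x y w z : V) (hxy : G.Adj x y) (hd : G.degree x ≤ G.degree y)
    (hwz : w ≠ z)
    (hcom : G.neighborSet x ∩ G.neighborSet y = {w, z})
    (hxw : ((G.neighborSet x ∩ G.neighborSet w) \ {y}).ncard = 0)
    (hxz : ((G.neighborSet x ∩ G.neighborSet z) \ {y}).ncard = 1)
    (hyw : ((G.neighborSet y ∩ G.neighborSet w) \ {x}).ncard = 1)
    (hyz : ((G.neighborSet y ∩ G.neighborSet z) \ {x}).ncard = 1) :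
    (G.degree y < 2 * G.degree x →
      llyCurv G x y = 5 / (G.degree x : ℝ) + 6 / (G.degree y : ℝ) - 2) ∧
    (2 * G.degree x ≤ G.degree y →
      llyCurv G x y = 4 / (G.degree x : ℝ) + 8 / (G.degree y : ℝ) - 2) := by
  classical
  obtain ⟨z', w', z'', hC⟩ := exists_edgeConfig hxy hwz hcom hxw hxz hyw hyz
  have : Nonempty V := ⟨x⟩
  have hdx : (G.degree x : ℝ) ≠ 0 := by exact_mod_cast hxy.degree_pos_left.ne'
  have hdy : (G.degree y : ℝ) ≠ 0 := by exact_mod_cast hxy.degree_pos_right.ne'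
  refine ⟨fun h => ?_, fun h => ?_⟩
  · rw [hC.llyCurv_eq hmax.1 hmax.connected hd (A := 1) (.inl ⟨rfl, h.le⟩), curvatureBound]
    push_cast
    field_simp
    ring
  · rw [hC.llyCurv_eq hmax.1 hmax.connected hd (A := 0) (.inr ⟨rfl, h⟩), curvatureBound]
    push_cast
    field_simp
    ring
end

section
/- Let G be a finite simple maximal outerplanar graph and let xy be an edge of G with d_x ≤ d_y whose common neighborhood is N(x) ∩ N(y) = {w, z} with w ≠ z, such that |N(x) ∩ N(w) \ {y}| = 1, |N(x) ∩ N(z) \ {y}| = 1, |N(y) ∩ N(w) \ {x}| = 1, and |N(y) ∩ N(z) \ {x}| = 1. Then the Lin–Lu–Yau curvature satisfies κ(x,y) = 4/d_x + 8/d_y − 2. -/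
open SimpleGraph

/-!
Write `a`, `b`, `c`, `e` for the vertices given by the four cardinality hypotheses. The value is
attained by the smallest `1`-Lipschitz function `f` with `f ≥ 1` at `y`, `c`, `e` and `f ≥ 2` at
the other neighbours of `y`: it vanishes at `x`, `w`, `z`, and it is `-1` at the other
neighbours of `x` because in an outerplanar graph a path from them to the neighbours of `y`
avoiding the 4-cycle `x w y z` would complete a `K_{2,3}` minor. Conversely, for admissible `g`
let `K = (g w - g x) + (g z - g x) ≥ 0`; bounding the terms of `y, w, z, a, b` in `Δg(x)` and of
`x, w, z, c, e` in `Δg(y)` gives `d_x Δg(x) ≥ 2K + 4 - d_x` and `d_y Δg(y) ≤ 2K - 8 + d_y`, and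
`d_x ≤ d_y` makes the `K`-terms harmless.

Distances are meaningful because a maximal outerplanar graph is connected: an edge between two
components creates no minor of the 2-connected graphs `K₄` and `K_{2,3}`.
-/

namespace SimpleGraph

variable {V W : Type*} {G : SimpleGraph V} {H : SimpleGraph W}

theorem IsContained.isMinorOf (h : H ⊑ G) : H.IsMinorOf G := by
  obtain ⟨f⟩ := h
  exact ⟨fun i => {f i}, fun _ => .of_subsingleton,
    fun i j hij => Set.disjoint_singleton.2 (f.injective.ne hij),
    fun i j hij => ⟨f i, rfl, f j, rfl, f.toHom.map_adj hij⟩⟩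

theorem isMinorOf_completeBipartiteGraph_two_three {p₁ p₂ q₁ q₂ u₁ u₂ : V} {U : Set V}
    (hU : (G.induce U).Connected) (hp : p₁ ≠ p₂) (hq : q₁ ≠ q₂)
    (h₁₁ : G.Adj p₁ q₁) (h₁₂ : G.Adj p₁ q₂) (h₂₁ : G.Adj p₂ q₁) (h₂₂ : G.Adj p₂ q₂)
    (hp₁ : p₁ ∉ U) (hp₂ : p₂ ∉ U) (hq₁ : q₁ ∉ U) (hq₂ : q₂ ∉ U)
    (hu₁ : u₁ ∈ U) (hu₂ : u₂ ∈ U) (hpu₁ : G.Adj p₁ u₁) (hpu₂ : G.Adj p₂ u₂) :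
    (completeBipartiteGraph (Fin 2) (Fin 3)).IsMinorOf G := by
  have hsingle : ∀ v : V, (G.induce {v}).Connected := fun _ => .of_subsingleton
  refine ⟨Sum.elim ![{p₁}, {p₂}] ![{q₁}, {q₂}, U], ?_, ?_, ?_⟩
  · rintro (i | j)
    · fin_cases i <;> exact hsingle _
    · fin_cases j
      exacts [hsingle _, hsingle _, hU]
  · rintro (i | i) (j | j) hij <;> fin_cases i <;> fin_cases j <;>
      simp_all [h₁₁.ne, h₁₂.ne, h₂₁.ne, h₂₂.ne, h₁₁.ne', h₁₂.ne', h₂₁.ne', h₂₂.ne',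
        Ne.symm hp, Ne.symm hq]
  · rintro (i | i) (j | j) hij <;> fin_cases i <;> fin_cases j <;>
      simp_all [G.adj_comm _ p₁, G.adj_comm _ p₂]
    exacts [⟨u₁, hu₁, hpu₁⟩, ⟨u₂, hu₂, hpu₂⟩, ⟨u₁, hu₁, hpu₁⟩, ⟨u₂, hu₂, hpu₂⟩]

theorem Reachable.map_of_forall_adj {G' : SimpleGraph W} (f : V → W)
    (hf : ∀ u v, G.Adj u v → G'.Reachable (f u) (f v)) {u v : V} (h : G.Reachable u v) :
    G'.Reachable (f u) (f v) := by
  obtain ⟨p⟩ := h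
  induction p with
  | nil => rfl
  | cons huv _ ih => exact (hf _ _ huv).trans ih

theorem Reachable.iff_of_forall_adj {P : V → Prop} (hP : ∀ u v, G.Adj u v → (P u ↔ P v))
    {u v : V} (h : G.Reachable u v) : P u ↔ P v := by
  obtain ⟨p⟩ := h
  induction p with
  | nil => rfl
  | cons huv _ ih => exact (hP _ _ huv).trans ih

theorem Preconnected.iff_of_forall_adj {S : Set V} (hS : (G.induce S).Preconnected)
    {P : V → Prop} (hP : ∀ u v, G.Adj u v → (P u ↔ P v)) {u v : V} (hu : u ∈ S) (hv : v ∈ S) :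
    P u ↔ P v :=
  Reachable.iff_of_forall_adj (G := G.induce S) (P := fun s => P s) (fun _ _ h => hP _ _ h)
    (hS ⟨u, hu⟩ ⟨v, hv⟩)

section AddEdge

variable {a b : V}

theorem Adj.of_sup_edge_s16 {u v : V} (h : (G ⊔ edge a b).Adj u v) :
    G.Adj u v ∨ (u = a ∧ v = b ∨ u = b ∧ v = a) := by
  rw [sup_adj, edge_adj] at h
  tauto

theorem induce_sup_edge_of_notMem {S : Set V} (h : a ∉ S ∨ b ∉ S) :
    (G ⊔ edge a b).induce S = G.induce S := by
  ext ⟨u, hu⟩ ⟨v, hv⟩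
  simp only [comap_adj, Function.Embedding.coe_subtype, sup_adj, edge_adj]
  constructor
  · rintro (huv | ⟨⟨rfl, rfl⟩ | ⟨rfl, rfl⟩, -⟩) <;> tauto
  · exact Or.inl

variable {P : V → Prop}

theorem connected_induce_inter_of_sup_edge (hP : ∀ u v, G.Adj u v → (P u ↔ P v)) (ha : P a)
    (hb : ¬P b) {S : Set V} (hS : ((G ⊔ edge a b).induce S).Connected) (haS : a ∈ S) :
    (G.induce (S ∩ {v | P v})).Connected := by
  classical
  -- collapse the part of `S` on the side of `b` onto `a`
  let π : S → ↥(S ∩ {v | P v}) := fun v => if h : P v then ⟨v, v.2, h⟩ else ⟨a, haS, ha⟩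
  have hπ : ∀ u v : S, ((G ⊔ edge a b).induce S).Adj u v →
      (G.induce (S ∩ {v | P v})).Reachable (π u) (π v) := by
    rintro ⟨u, hu⟩ ⟨v, hv⟩ huv
    rcases Adj.of_sup_edge_s16 (u := u) (v := v) huv with huv | ⟨rfl, rfl⟩ | ⟨rfl, rfl⟩
    · by_cases hPu : P u
      · have hPv : P v := (hP u v huv).1 hPu
        simp only [π, dif_pos hPu, dif_pos hPv]
        exact Adj.reachable (by simpa using huv)
      · have hPv : ¬P v := fun h => hPu ((hP u v huv).2 h)
        simp only [π, dif_neg hPu, dif_neg hPv]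
        rfl
    all_goals
      simp only [π, dif_pos ha, dif_neg hb]
      rfl
  have : Nonempty ↥(S ∩ {v | P v}) := ⟨⟨a, haS, ha⟩⟩
  refine ⟨fun ⟨u, hu, hPu⟩ ⟨v, hv, hPv⟩ => ?_⟩
  have := (hS.preconnected ⟨u, hu⟩ ⟨v, hv⟩).map_of_forall_adj π hπ
  simpa only [π, dif_pos (show P u from hPu), dif_pos (show P v from hPv)] using this

variable {B : W → Set V}

theorem isMinorOf_of_forall_notMem (hconn : ∀ i, ((G ⊔ edge a b).induce (B i)).Connected)
    (hdisj : Pairwise fun i j => Disjoint (B i) (B j))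
    (hadj : ∀ ⦃i j⦄, H.Adj i j → ∃ u ∈ B i, ∃ v ∈ B j, (G ⊔ edge a b).Adj u v)
    (ha : ∀ i, a ∉ B i) : H.IsMinorOf G := by
  refine ⟨B, fun i => induce_sup_edge_of_notMem (Or.inl (ha i)) ▸ hconn i, hdisj,
    fun i j hij => ?_⟩
  obtain ⟨u, hu, v, hv, huv⟩ := hadj hij
  refine ⟨u, hu, v, hv, huv.of_sup_edge_s16.resolve_right ?_⟩
  rintro (⟨rfl, -⟩ | ⟨-, rfl⟩)
  exacts [ha i hu, ha j hv]

theorem isMinorOf_of_sup_edge_of_subset [DecidableEq W] (hP : ∀ u v, G.Adj u v → (P u ↔ P v))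
    (ha : P a) (hb : ¬P b) (hconn : ∀ i, ((G ⊔ edge a b).induce (B i)).Connected)
    (hdisj : Pairwise fun i j => Disjoint (B i) (B j))
    (hadj : ∀ ⦃i j⦄, H.Adj i j → ∃ u ∈ B i, ∃ v ∈ B j, (G ⊔ edge a b).Adj u v)
    {p : W} (hap : a ∈ B p) (hsub : ∀ j ≠ p, B j ⊆ {v | P v}) : H.IsMinorOf G := by
  have hbB : ∀ j ≠ p, b ∉ B j := fun j hj h => hb (hsub j hj h)
  have hpB : ∀ ⦃k⦄, a ∈ B k → k = p := fun k h => by_contra fun hk => (hdisj hk).ne_of_mem h hap rfl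
  have hwit : ∀ ⦃i j⦄, H.Adj i j → ∀ u ∈ B i, ∀ v ∈ B j, (G ⊔ edge a b).Adj u v → G.Adj u v := by
    intro i j hij u hu v hv huv
    rcases huv.of_sup_edge_s16 with h | ⟨rfl, rfl⟩ | ⟨rfl, rfl⟩
    · exact h
    · obtain rfl := hpB hu
      exact absurd hv (hbB j (H.ne_of_adj hij).symm)
    · obtain rfl := hpB hv
      exact absurd hu (hbB i (H.ne_of_adj hij))
  set B' := Function.update B p (B p ∩ {v | P v})
  have hB'p : B' p = B p ∩ {v | P v} := Function.update_self ..
  have hB'ne : ∀ k ≠ p, B' k = B k := fun k hk => Function.update_of_ne hk ..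
  have hB' : ∀ k, B' k ⊆ B k := fun k => by
    rcases eq_or_ne k p with rfl | hk
    · exact hB'p ▸ Set.inter_subset_left
    · exact (hB'ne k hk).le
  have hmemB' : ∀ k, ∀ u ∈ B k, (k = p → P u) → u ∈ B' k := fun k u hu hPu => by
    rcases eq_or_ne k p with rfl | hk
    · exact hB'p ▸ ⟨hu, hPu rfl⟩
    · exact (hB'ne k hk).ge hu
  refine ⟨B', fun i => ?_, hdisj.mono fun i j h => h.mono (hB' i) (hB' j), fun i j hij => ?_⟩
  · rcases eq_or_ne i p with rfl | hi
    · rw [hB'p]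
      exact connected_induce_inter_of_sup_edge hP ha hb (hconn i) hap
    · rw [hB'ne i hi, ← induce_sup_edge_of_notMem (Or.inr (hbB i hi))]
      exact hconn i
  · obtain ⟨u, hu, v, hv, huv⟩ := hadj hij
    have huv' := hwit hij u hu v hv huv
    refine ⟨u, hmemB' i u hu fun hi => ?_, v, hmemB' j v hv fun hj => ?_, huv'⟩
    · subst hi
      exact (hP u v huv').2 (hsub j (H.ne_of_adj hij).symm hv)
    · subst hj
      exact (hP u v huv').1 (hsub i (H.ne_of_adj hij) hu)

theorem iff_of_mem_of_sup_edge {p : W} (hcut : (H.induce {p}ᶜ).Preconnected)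
    (hP : ∀ u v, G.Adj u v → (P u ↔ P v)) (hconn : ∀ i, ((G ⊔ edge a b).induce (B i)).Connected)
    (hadj : ∀ ⦃i j⦄, H.Adj i j → ∃ u ∈ B i, ∃ v ∈ B j, (G ⊔ edge a b).Adj u v)
    (hBa : ∀ j ≠ p, a ∉ B j) ⦃j k : W⦄ (hj : j ≠ p) (hk : k ≠ p) ⦃u v : V⦄ (hu : u ∈ B j)
    (hv : v ∈ B k) : P u ↔ P v := by
  have hside : ∀ i ≠ p, ∀ u ∈ B i, ∀ v ∈ B i, (P u ↔ P v) := fun i hi u hu v hv =>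
    (induce_sup_edge_of_notMem (Or.inl (hBa i hi)) ▸ hconn i).preconnected.iff_of_forall_adj
      hP hu hv
  let s : ({p}ᶜ : Set W) → Prop := fun i => ∃ u ∈ B i, P u
  have hs : ∀ i : ({p}ᶜ : Set W), ∀ u ∈ B i, (s i ↔ P u) := fun i u hu =>
    ⟨fun ⟨u', hu', hPu'⟩ => (hside i i.2 u' hu' u hu).1 hPu', fun h => ⟨u, hu, h⟩⟩
  have : s ⟨j, hj⟩ ↔ s ⟨k, hk⟩ := by
    refine (hcut ⟨j, hj⟩ ⟨k, hk⟩).iff_of_forall_adj fun i i' hii' => ?_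
    obtain ⟨u', hu', v', hv', huv'⟩ := hadj hii'
    rw [hs i u' hu', hs i' v' hv']
    refine hP u' v' (huv'.of_sup_edge_s16.resolve_right ?_)
    rintro (⟨rfl, -⟩ | ⟨-, rfl⟩)
    exacts [hBa i i.2 hu', hBa i' i'.2 hv']
  rwa [hs ⟨j, hj⟩ u hu, hs ⟨k, hk⟩ v hv] at this

end AddEdge

theorem IsMinorOf.of_sup_edge_of_not_reachable (hcut : ∀ i, (H.induce {i}ᶜ).Preconnected)
    (hdeg : ∀ i, (H.neighborSet i).Nontrivial) {a b : V} (hab : ¬G.Reachable a b)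
    (h : H.IsMinorOf (G ⊔ edge a b)) : H.IsMinorOf G := by
  classical
  set P : V → Prop := G.Reachable a
  have hP : ∀ u v, G.Adj u v → (P u ↔ P v) := fun u v huv =>
    ⟨fun h => h.trans huv.reachable, fun h => h.trans huv.symm.reachable⟩
  have ha : P a := Reachable.refl a
  obtain ⟨B, hconn, hdisj, hadj⟩ := h
  by_cases hpa : ∃ p, a ∈ B p
  swap
  · push Not at hpa
    exact isMinorOf_of_forall_notMem hconn hdisj hadj hpa
  obtain ⟨p, hap⟩ := hpa
  have hBa : ∀ j ≠ p, a ∉ B j := fun j hj h => (hdisj hj).ne_of_mem h hap rfl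
  have hsame := iff_of_mem_of_sup_edge (hcut p) hP hconn hadj hBa
  obtain ⟨q, hq, q', hq', hqq'⟩ := hdeg p
  have hqp : q ≠ p := (H.ne_of_adj hq).symm
  obtain ⟨⟨u₀, hu₀⟩⟩ := (hconn q).nonempty
  -- as `H - p` is connected, all branch sets but `B p` lie on the side of `u₀`; cut `B p` down
  -- to that side
  by_cases hPu₀ : P u₀
  · exact isMinorOf_of_sup_edge_of_subset hP ha hab hconn hdisj hadj hap
      fun j hj v hv => (hsame hj hqp hv hu₀).2 hPu₀
  by_cases hbp : b ∈ B p
  · rw [edge_comm] at hconn hadj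
    exact isMinorOf_of_sup_edge_of_subset (P := fun v => ¬P v)
      (fun u v huv => not_congr (hP u v huv)) hab (not_not.2 ha) hconn hdisj hadj hbp
      fun j hj v hv hPv => hPu₀ ((hsame hj hqp hv hu₀).1 hPv)
  -- now `B p` lies on the side of `a` and every other branch set on the side of `b`, so only
  -- the new edge can join `B p` to its neighbours: they all contain `b`
  have hPp : ∀ u ∈ B p, P u := fun u hu =>
    ((induce_sup_edge_of_notMem (Or.inr hbp) ▸ hconn p).preconnected.iff_of_forall_adj
      hP hap hu).1 ha
  have hbB : ∀ j, H.Adj p j → b ∈ B j := by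
    intro j hj
    obtain ⟨u, hu, v, hv, huv⟩ := hadj hj
    rcases huv.of_sup_edge_s16 with huv | ⟨rfl, rfl⟩ | ⟨rfl, rfl⟩
    · exact (hPu₀ <| (hsame (H.ne_of_adj hj).symm hqp hv hu₀).1 <| (hP u v huv).1 (hPp u hu)).elim
    · exact hv
    · exact absurd hu hbp
  exact ((hdisj hqq').ne_of_mem (hbB q hq) (hbB q' hq') rfl).elim

instance {α β : Type*} : DecidableRel (completeBipartiteGraph α β).Adj := fun v w =>
  inferInstanceAs (Decidable (v.isLeft ∧ w.isRight ∨ v.isRight ∧ w.isLeft))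

end SimpleGraph

section Outerplanar

variable {V : Type*} {G : SimpleGraph V}

theorem MaximalOuterplanar.preconnected (hG : MaximalOuterplanar G) : G.Preconnected := by
  intro a b
  by_contra hab
  have hG' := hG.2 a b (fun h => hab (h ▸ Reachable.refl a)) fun h => hab h.reachable
  rw [Outerplanar, not_and_or, not_not, not_not] at hG'
  rcases hG' with h | h
  · exact hG.1.1 <| h.of_sup_edge_of_not_reachable (by decide)
      (by simp only [Set.Nontrivial, mem_neighborSet]; decide) hab
  · exact hG.1.2 <| h.of_sup_edge_of_not_reachable (by decide)
      (by simp only [Set.Nontrivial, mem_neighborSet]; decide) hab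

theorem Outerplanar.cliqueFree_four (hG : Outerplanar G) : G.CliqueFree 4 :=
  cliqueFree_iff.2 ⟨fun f => hG.1 (IsContained.isMinorOf ⟨f⟩)⟩

theorem Outerplanar.not_adj_of_adj_of_adj (hG : Outerplanar G) {x y w z : V} (hxy : G.Adj x y)
    (hxw : G.Adj x w) (hxz : G.Adj x z) (hyw : G.Adj y w) (hyz : G.Adj y z) : ¬G.Adj w z := by
  classical
  exact fun hwz => hG.cliqueFree_four ({x, y, w, z} : Finset V) <|
    (is3Clique_triple_iff.2 ⟨hyw, hyz, hwz⟩).insert (by simp [hxy, hxw, hxz])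

theorem Outerplanar.exists_mem_support_of_walk (hG : Outerplanar G) {p₁ p₂ q₁ q₂ u₁ u₂ : V}
    (hp : p₁ ≠ p₂) (hq : q₁ ≠ q₂) (h₁₁ : G.Adj p₁ q₁) (h₁₂ : G.Adj p₁ q₂) (h₂₁ : G.Adj p₂ q₁)
    (h₂₂ : G.Adj p₂ q₂) (hpu₁ : G.Adj p₁ u₁) (hpu₂ : G.Adj p₂ u₂) (W : G.Walk u₁ u₂) :
    ∃ s ∈ W.support, s = p₁ ∨ s = p₂ ∨ s = q₁ ∨ s = q₂ := by
  by_contra! h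
  exact hG.2 <| isMinorOf_completeBipartiteGraph_two_three W.connected_induce_support hp hq
    h₁₁ h₁₂ h₂₁ h₂₂ (fun hs => (h _ hs).1 rfl) (fun hs => (h _ hs).2.1 rfl)
    (fun hs => (h _ hs).2.2.1 rfl) (fun hs => (h _ hs).2.2.2 rfl) W.start_mem_support
    W.end_mem_support hpu₁ hpu₂

theorem Outerplanar.eq_or_eq_of_adj_of_adj (hG : Outerplanar G) {p₁ p₂ q₁ q₂ s : V}
    (hp : p₁ ≠ p₂) (hq : q₁ ≠ q₂) (h₁₁ : G.Adj p₁ q₁) (h₁₂ : G.Adj p₁ q₂) (h₂₁ : G.Adj p₂ q₁)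
    (h₂₂ : G.Adj p₂ q₂) (hs₁ : G.Adj p₁ s) (hs₂ : G.Adj p₂ s) : s = q₁ ∨ s = q₂ := by
  obtain ⟨s', hs', h⟩ := hG.exists_mem_support_of_walk hp hq h₁₁ h₁₂ h₂₁ h₂₂ hs₁ hs₂ Walk.nil
  rw [Walk.support_nil, List.mem_singleton] at hs'
  subst hs'
  rcases h with rfl | rfl | h
  exacts [absurd hs₁ G.irrefl, absurd hs₂ G.irrefl, h]

theorem Outerplanar.no_shortcut (hG : Outerplanar G) {x y w z u v : V} (hxy : G.Adj x y)
    (hwz : w ≠ z) (hxw : G.Adj x w) (hxz : G.Adj x z) (hyw : G.Adj y w) (hyz : G.Adj y z)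
    (hcom : ∀ s, G.Adj x s → G.Adj y s → s = w ∨ s = z) (hxu : G.Adj x u) (hyv : G.Adj y v)
    (hu : u ∉ [y, w, z]) (hv : v ∉ [x, w, z]) :
    ¬G.Adj u v ∧ ∀ m, G.Adj u m → G.Adj m v → m = w ∨ m = z := by
  obtain ⟨huy, huw, huz⟩ : u ≠ y ∧ u ≠ w ∧ u ≠ z := by simpa using hu
  obtain ⟨hvx, hvw, hvz⟩ : v ≠ x ∧ v ≠ w ∧ v ≠ z := by simpa using hv
  have hu' : ¬(u = x ∨ u = y ∨ u = w ∨ u = z) := by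
    rintro (rfl | rfl | rfl | rfl)
    exacts [G.irrefl hxu, huy rfl, huw rfl, huz rfl]
  have hv' : ¬(v = x ∨ v = y ∨ v = w ∨ v = z) := by
    rintro (rfl | rfl | rfl | rfl)
    exacts [hvx rfl, G.irrefl hyv, hvw rfl, hvz rfl]
  have hmeets := hG.exists_mem_support_of_walk hxy.ne hwz hxw hxz hyw hyz hxu hyv
  constructor
  · intro huv
    obtain ⟨s, hs, h⟩ := hmeets (.cons huv .nil)
    simp only [Walk.support_cons, Walk.support_nil, List.mem_cons, List.not_mem_nil,
      or_false] at hs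
    rcases hs with rfl | rfl
    exacts [hu' h, hv' h]
  · intro m hum hmv
    obtain ⟨s, hs, h⟩ := hmeets (.cons hum (.cons hmv .nil))
    simp only [Walk.support_cons, Walk.support_nil, List.mem_cons, List.not_mem_nil,
      or_false] at hs
    rcases hs with rfl | rfl | rfl
    · exact (hu' h).elim
    · rcases h with rfl | rfl | h
      exacts [((hcom v hmv hyv).elim hvw hvz).elim, ((hcom u hxu hum.symm).elim huw huz).elim, h]
    · exact (hv' h).elim

end Outerplanar

theorem div_add_div_le_div_add_div {α β A B K dx dy : ℝ} (hdx : 0 < dx) (hd : dx ≤ dy)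
    (hK : 0 ≤ K) (hA : α + K ≤ A) (hB : β - K ≤ B) : α / dx + β / dy ≤ A / dx + B / dy := by
  have hdy : 0 < dy := hdx.trans_le hd
  have hKd : K / dy ≤ K / dx := div_le_div_of_nonneg_left hK hdx hd
  calc α / dx + β / dy ≤ (α + K) / dx + (β - K) / dy := by
        rw [add_div, sub_div]
        linarith
    _ ≤ A / dx + B / dy := by gcongr

section Laplacian

variable {V : Type*} {G : SimpleGraph V} [Fintype V] [DecidableRel G.Adj]

theorem graphLap_eq {v : V} (hv : G.degree v ≠ 0) (g : V → ℤ) :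
    graphLap G g v = ((∑ u ∈ G.neighborFinset v, (g u - g v + 1) : ℤ) : ℝ) / G.degree v - 1 := by
  have hv' : (G.degree v : ℝ) ≠ 0 := by exact_mod_cast hv
  rw [graphLap, eq_sub_iff_add_eq, div_add_one hv']
  push_cast
  rw [Finset.sum_add_distrib, Finset.sum_const, card_neighborFinset_eq_degree]
  simp

theorem graphLap_neg (g : V → ℤ) (v : V) : graphLap G (-g) v = -graphLap G g v := by
  simp only [graphLap, Pi.neg_apply, Int.cast_neg, neg_sub_neg, ← neg_div,
    ← Finset.sum_neg_distrib, neg_sub]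

theorem graphLap_sub_graphLap {x y : V} (hx : G.degree x ≠ 0) (hy : G.degree y ≠ 0)
    (g : V → ℤ) :
    graphLap G g x - graphLap G g y =
      ((∑ u ∈ G.neighborFinset x, (g u - g x + 1) : ℤ) : ℝ) / G.degree x +
        ((∑ u ∈ G.neighborFinset y, (-g u - -g y + 1) : ℤ) : ℝ) / G.degree y - 2 := by
  rw [← neg_neg (graphLap G g y), ← graphLap_neg, graphLap_eq hx, graphLap_eq hy]
  simp only [Pi.neg_apply]
  ring

end Laplacian

namespace SimpleGraph

variable {V : Type*} {G : SimpleGraph V}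

theorem Connected.two_lt_dist (hconn : G.Connected) {u v : V} (hne : u ≠ v) (hnadj : ¬G.Adj u v)
    (hcommon : ∀ m, G.Adj u m → ¬G.Adj m v) : 2 < G.dist u v := by
  have h := two_lt_edist_iff.2 ⟨hne, hnadj, Set.eq_empty_of_forall_notMem fun m hm =>
    hcommon m hm.1 (G.adj_symm hm.2)⟩
  rw [← (hconn u v).coe_dist_eq_edist] at h
  exact_mod_cast h

theorem Connected.abs_sup'_sub_dist_sub_le (hconn : G.Connected) (P : Finset (V × ℤ))
    (hP : P.Nonempty) (u v : V) :
    |P.sup' hP (fun p => p.2 - G.dist u p.1) - P.sup' hP (fun p => p.2 - G.dist v p.1)| ≤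
      G.dist u v := by
  have key : ∀ u v, P.sup' hP (fun p => p.2 - G.dist u p.1) ≤
      P.sup' hP (fun p => p.2 - G.dist v p.1) + G.dist u v := by
    intro u v
    refine Finset.sup'_le _ _ fun p hp => ?_
    have h₁ := Finset.le_sup' (fun p => p.2 - (G.dist v p.1 : ℤ)) hp
    have h₂ : G.dist v p.1 ≤ G.dist u v + G.dist u p.1 := by
      rw [dist_comm (u := u)]
      exact hconn.dist_triangle
    omega
  have := key u v
  have := key v u
  rw [dist_comm] at this
  rw [abs_sub_le_iff]
  constructor <;> omega

section Sums

variable [Fintype V] [DecidableRel G.Adj]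

theorem list_sum_le_sum_neighborFinset {h : V → ℤ} {v : V} {l : List V} (hl : l.Nodup)
    (hadj : ∀ u ∈ l, G.Adj v u) (hh : ∀ u, G.Adj v u → u ∉ l → 0 ≤ h u) :
    (l.map h).sum ≤ ∑ u ∈ G.neighborFinset v, h u := by
  classical
  rw [← List.sum_toFinset h hl]
  exact Finset.sum_le_sum_of_subset_of_nonneg
    (fun u hu => by simpa using hadj u (by simpa using hu))
    fun u hu hul => hh u (by simpa using hu) (by simpa using hul)

theorem sum_neighborFinset_le_list_sum {h : V → ℤ} {v : V} {l : List V} (hl : l.Nodup)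
    (hadj : ∀ u ∈ l, G.Adj v u) (hh : ∀ u, G.Adj v u → u ∉ l → h u ≤ 0) :
    ∑ u ∈ G.neighborFinset v, h u ≤ (l.map h).sum := by
  classical
  rw [← List.sum_toFinset h hl]
  exact Finset.sum_le_sum_of_subset_of_nonpos'
    (fun u hu => by simpa using hadj u (by simpa using hu))
    fun u hu hul => hh u (by simpa using hu) (by simpa using hul)

theorem le_sum_neighborFinset {g : V → ℤ} (hg : ∀ u u', G.Adj u u' → g u - g u' ≤ 1)
    {v v₀ p q p' q' : V} (hl : [v₀, p, q, p', q'].Nodup) (h₀ : G.Adj v v₀) (hp : G.Adj v p)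
    (hq : G.Adj v q) (hp' : G.Adj v p') (hq' : G.Adj v q') (hpp' : G.Adj p p')
    (hqq' : G.Adj q q') :
    g v₀ + 2 * g p + 2 * g q - 5 * g v + 3 ≤ ∑ u ∈ G.neighborFinset v, (g u - g v + 1) := by
  refine le_trans ?_ (list_sum_le_sum_neighborFinset hl (by simp [h₀, hp, hq, hp', hq'])
    fun u hu _ => by linarith [hg v u hu])
  simp only [List.map_cons, List.map_nil, List.sum_cons, List.sum_nil]
  linarith [hg p p' hpp', hg q q' hqq']

end Sums

/-- The picture around the edge `xy`: `x w y z` is a 4-cycle with chord `xy`, and `a`, `b`, `c`,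
`e` are the apexes of triangles on its sides `xw`, `xz`, `yw`, `yz`. -/
structure EdgeConfig_s16 (G : SimpleGraph V) (x y w z a b c e : V) : Prop where
  adj_xy : G.Adj x y
  adj_xw : G.Adj x w
  adj_xz : G.Adj x z
  adj_yw : G.Adj y w
  adj_yz : G.Adj y z
  adj_xa : G.Adj x a
  adj_wa : G.Adj w a
  adj_xb : G.Adj x b
  adj_zb : G.Adj z b
  adj_yc : G.Adj y c
  adj_wc : G.Adj w c
  adj_ye : G.Adj y e
  adj_ze : G.Adj z e
  nodup_x : [y, w, z, a, b].Nodup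
  nodup_y : [x, w, z, c, e].Nodup
  eq_of_adj_x_y : ∀ u, G.Adj x u → G.Adj y u → u = w ∨ u = z
  eq_of_adj_y_w : ∀ u, G.Adj y u → G.Adj w u → u = x ∨ u = c
  eq_of_adj_y_z : ∀ u, G.Adj y u → G.Adj z u → u = x ∨ u = e
  no_shortcut : ∀ u v, G.Adj x u → G.Adj y v → u ∉ [y, w, z] → v ∉ [x, w, z] →
    ¬G.Adj u v ∧ ∀ m, G.Adj u m → G.Adj m v → m = w ∨ m = z

namespace EdgeConfig_s16

variable {x y w z a b c e : V}

theorem of_outerplanar (hG : Outerplanar G) (hxy : G.Adj x y) (hwz : w ≠ z)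
    (hcom : G.neighborSet x ∩ G.neighborSet y = {w, z})
    (ha : (G.neighborSet x ∩ G.neighborSet w) \ {y} = {a})
    (hb : (G.neighborSet x ∩ G.neighborSet z) \ {y} = {b})
    (hc : (G.neighborSet y ∩ G.neighborSet w) \ {x} = {c})
    (he : (G.neighborSet y ∩ G.neighborSet z) \ {x} = {e}) :
    EdgeConfig_s16 G x y w z a b c e := by
  have hmem : ∀ {s : Set V} {v : V}, s = {v} → v ∈ s := fun h => h ▸ rfl
  have hiff : ∀ {p q r s : V}, (G.neighborSet p ∩ G.neighborSet q) \ {r} = {s} →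
      ∀ u, G.Adj p u → G.Adj q u → u = r ∨ u = s := by
    intro p q r s h u hpu hqu
    by_cases hur : u = r
    · exact Or.inl hur
    · exact Or.inr (h ▸ ⟨⟨hpu, hqu⟩, hur⟩ : u ∈ ({_} : Set V))
  obtain ⟨hxw, hyw⟩ : w ∈ G.neighborSet x ∩ G.neighborSet y := hcom ▸ Set.mem_insert w {z}
  obtain ⟨hxz, hyz⟩ : z ∈ G.neighborSet x ∩ G.neighborSet y :=
    hcom ▸ Set.mem_insert_of_mem w rfl
  obtain ⟨⟨hxa, hwa⟩, hay : a ≠ y⟩ := hmem ha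
  obtain ⟨⟨hxb, hzb⟩, hby : b ≠ y⟩ := hmem hb
  obtain ⟨⟨hyc, hwc⟩, hcx : c ≠ x⟩ := hmem hc
  obtain ⟨⟨hye, hze⟩, hex : e ≠ x⟩ := hmem he
  have hcom' : ∀ u, G.Adj x u → G.Adj y u → u = w ∨ u = z := fun u hxu hyu => by
    have h : u ∈ G.neighborSet x ∩ G.neighborSet y := ⟨hxu, hyu⟩
    rwa [hcom] at h
  have hnwz : ¬G.Adj w z := hG.not_adj_of_adj_of_adj hxy hxw hxz hyw hyz
  have hab : a ≠ b := fun h => (hG.eq_or_eq_of_adj_of_adj hwz hxy.ne hxw.symm hyw.symm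
    hxz.symm hyz.symm hwa (h ▸ hzb)).elim hxa.ne' hay
  have hce : c ≠ e := fun h => (hG.eq_or_eq_of_adj_of_adj hwz hxy.ne hxw.symm hyw.symm
    hxz.symm hyz.symm hwc (h ▸ hze)).elim hcx hyc.ne'
  refine ⟨hxy, hxw, hxz, hyw, hyz, hxa, hwa, hxb, hzb, hyc, hwc, hye, hze, ?_, ?_, hcom',
    hiff hc, hiff he, fun u v hxu hyv hu hv =>
      hG.no_shortcut hxy hwz hxw hxz hyw hyz hcom' hxu hyv hu hv⟩
  · have hwb : w ≠ b := by rintro rfl; exact hnwz hzb.symm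
    have hza : z ≠ a := by rintro rfl; exact hnwz hwa
    simp [hyw.ne, hyz.ne, hay.symm, hby.symm, hwz, hwa.ne, hwb, hza, hzb.ne, hab]
  · have hwe : w ≠ e := by rintro rfl; exact hnwz hze.symm
    have hzc : z ≠ c := by rintro rfl; exact hnwz hwc
    simp [hxw.ne, hxz.ne, hcx.symm, hex.symm, hwz, hwc.ne, hwe, hzc, hze.ne, hce]

variable (hC : EdgeConfig_s16 G x y w z a b c e)
include hC

theorem c_notMem : c ∉ [x, w, z] := by
  obtain ⟨⟨-, -, hxc, -⟩, ⟨-, hwc, -⟩, ⟨hzc, -⟩, -⟩ := by simpa using hC.nodup_y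
  simp [Ne.symm hxc, Ne.symm hwc, Ne.symm hzc]

theorem e_notMem : e ∉ [x, w, z] := by
  obtain ⟨⟨-, -, -, hxe⟩, ⟨-, -, hwe⟩, ⟨-, hze⟩, -⟩ := by simpa using hC.nodup_y
  simp [Ne.symm hxe, Ne.symm hwe, Ne.symm hze]

theorem one_lt_dist_of_adj_y (hconn : G.Connected) {s t : V} (hs : s ∈ [x, w, z])
    (hyt : G.Adj y t) (ht : t ∉ [x, w, z, c, e]) : 1 < G.dist s t := by
  obtain ⟨htx, htw, htz, htc, hte⟩ : t ≠ x ∧ t ≠ w ∧ t ≠ z ∧ t ≠ c ∧ t ≠ e := by simpa using ht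
  refine hconn.one_lt_dist_of_ne_of_not_adj (by rintro rfl; simp_all) fun hst => ?_
  simp only [List.mem_cons, List.not_mem_nil, or_false] at hs
  rcases hs with rfl | rfl | rfl
  exacts [(hC.eq_of_adj_x_y t hst hyt).elim htw htz, (hC.eq_of_adj_y_w t hyt hst).elim htx htc,
    (hC.eq_of_adj_y_z t hyt hst).elim htx hte]

theorem ne_of_adj {u v : V} (hxu : G.Adj x u) (hu : u ∉ [y, w, z]) (hyv : G.Adj y v) : u ≠ v := by
  rintro rfl
  rcases hC.eq_of_adj_x_y u hxu hyv with rfl | rfl <;> simp at hu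

theorem one_lt_dist_of_adj_x (hconn : G.Connected) {u v : V} (hxu : G.Adj x u)
    (hu : u ∉ [y, w, z]) (hyv : G.Adj y v) (hv : v ∉ [x, w, z]) : 1 < G.dist u v :=
  hconn.one_lt_dist_of_ne_of_not_adj (hC.ne_of_adj hxu hu hyv) (hC.no_shortcut u v hxu hyv hu hv).1

theorem two_lt_dist_of_adj_x (hconn : G.Connected) {u t : V} (hxu : G.Adj x u)
    (hu : u ∉ [y, w, z]) (hyt : G.Adj y t) (ht : t ∉ [x, w, z, c, e]) : 2 < G.dist u t := by
  obtain ⟨htx, htw, htz, htc, hte⟩ : t ≠ x ∧ t ≠ w ∧ t ≠ z ∧ t ≠ c ∧ t ≠ e := by simpa using ht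
  have h := hC.no_shortcut u t hxu hyt hu (by simp [htx, htw, htz])
  refine hconn.two_lt_dist (hC.ne_of_adj hxu hu hyt) h.1 fun m hum hmt => ?_
  rcases h.2 m hum hmt with rfl | rfl
  exacts [(hC.eq_of_adj_y_w t hyt hmt).elim htx htc, (hC.eq_of_adj_y_z t hyt hmt).elim htx hte]

section Extremal

variable (hconn : G.Connected) {f : V → ℤ}
  (hf : ∀ u m, f u ≤ m ↔ 1 - (G.dist u y : ℤ) ≤ m ∧ 1 - (G.dist u c : ℤ) ≤ m ∧
    1 - (G.dist u e : ℤ) ≤ m ∧ ∀ t, G.Adj y t → t ∉ [x, w, z, c, e] → 2 - (G.dist u t : ℤ) ≤ m)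
include hconn hf

theorem apply_eq_zero {s : V} (hs : s ∈ [x, w, z]) : f s = 0 := by
  have hsy : G.Adj s y := by
    simp only [List.mem_cons, List.not_mem_nil, or_false] at hs
    rcases hs with rfl | rfl | rfl
    exacts [hC.adj_xy, hC.adj_yw.symm, hC.adj_yz.symm]
  have hsc := hconn.pos_dist_of_ne fun h : s = c => hC.c_notMem (h ▸ hs)
  have hse := hconn.pos_dist_of_ne fun h : s = e => hC.e_notMem (h ▸ hs)
  refine le_antisymm ((hf s 0).2 ⟨?_, by omega, by omega, fun t hyt ht => ?_⟩) ?_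
  · simp [dist_eq_one_iff_adj.2 hsy]
  · have := hC.one_lt_dist_of_adj_y hconn hs hyt ht
    omega
  · simpa [dist_eq_one_iff_adj.2 hsy] using ((hf s (f s)).1 le_rfl).1

omit hC in
theorem apply_y : f y = 1 := by
  refine le_antisymm ((hf y 1).2 ⟨by simp, by simp, by simp, fun t hyt _ => ?_⟩) ?_
  · have := hconn.pos_dist_of_ne hyt.ne
    omega
  · simpa using ((hf y (f y)).1 le_rfl).1

theorem apply_le_neg_one {u : V} (hxu : G.Adj x u) (hu : u ∉ [y, w, z]) : f u ≤ -1 := by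
  have hy : 1 < G.dist u y := hconn.one_lt_dist_of_ne_of_not_adj (by rintro rfl; simp at hu)
    fun h => by rcases hC.eq_of_adj_x_y u hxu h.symm with rfl | rfl <;> simp at hu
  have hc := hC.one_lt_dist_of_adj_x hconn hxu hu hC.adj_yc hC.c_notMem
  have he := hC.one_lt_dist_of_adj_x hconn hxu hu hC.adj_ye hC.e_notMem
  refine (hf u (-1)).2 ⟨by omega, by omega, by omega, fun t hyt ht => ?_⟩
  have := hC.two_lt_dist_of_adj_x hconn hxu hu hyt ht
  omega

variable [Fintype V] [DecidableRel G.Adj]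

theorem graphLap_sub_graphLap_le :
    graphLap G f x - graphLap G f y ≤ 4 / (G.degree x : ℝ) + 8 / (G.degree y : ℝ) - 2 := by
  have hdx : G.degree x ≠ 0 := (G.degree_pos_iff_exists_adj x |>.2 ⟨y, hC.adj_xy⟩).ne'
  have hdy : G.degree y ≠ 0 := (G.degree_pos_iff_exists_adj y |>.2 ⟨x, hC.adj_xy.symm⟩).ne'
  have hlow := fun u => (hf u (f u)).1 le_rfl
  have hfx := hC.apply_eq_zero hconn hf (s := x) (by simp)
  have hfw := hC.apply_eq_zero hconn hf (s := w) (by simp)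
  have hfz := hC.apply_eq_zero hconn hf (s := z) (by simp)
  have hfy := apply_y hconn hf
  have hSx : ∑ u ∈ G.neighborFinset x, (f u - f x + 1) ≤ 4 := by
    refine (sum_neighborFinset_le_list_sum (l := [y, w, z])
      ((List.sublist_append_left [y, w, z] [a, b]).nodup hC.nodup_x)
      (by simp [hC.adj_xy, hC.adj_xw, hC.adj_xz]) fun u hxu hu => ?_).trans ?_
    · linarith [hC.apply_le_neg_one hconn hf hxu hu]
    · simp only [List.map_cons, List.map_nil, List.sum_cons, List.sum_nil]
      omega
  have hSy : ∑ u ∈ G.neighborFinset y, (-f u - -f y + 1) ≤ 8 := by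
    refine (sum_neighborFinset_le_list_sum hC.nodup_y
      (by simp [hC.adj_xy.symm, hC.adj_yw, hC.adj_yz, hC.adj_yc, hC.adj_ye])
      fun u hyu hu => ?_).trans ?_
    · have := (hlow u).2.2.2 u hyu hu
      simp only [dist_self, CharP.cast_eq_zero, sub_zero] at this
      omega
    · have hc := (hlow c).2.1
      have he := (hlow e).2.2.1
      simp only [dist_self, CharP.cast_eq_zero, sub_zero] at hc he
      simp only [List.map_cons, List.map_nil, List.sum_cons, List.sum_nil]
      omega
  rw [graphLap_sub_graphLap hdx hdy, sub_le_sub_iff_right]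
  gcongr <;> exact_mod_cast ‹_›

end Extremal

variable [Fintype V] [DecidableRel G.Adj]

theorem le_graphLap_sub_graphLap (hd : G.degree x ≤ G.degree y) {g : V → ℤ}
    (hg : ∀ u v, |g u - g v| ≤ (G.dist u v : ℤ)) (hgxy : g y - g x = 1) :
    4 / (G.degree x : ℝ) + 8 / (G.degree y : ℝ) - 2 ≤ graphLap G g x - graphLap G g y := by
  have hg₁ : ∀ u v, G.Adj u v → g u - g v ≤ 1 := fun u v huv => by
    have := hg u v
    rw [dist_eq_one_iff_adj.2 huv, Nat.cast_one, abs_le] at this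
    exact this.2
  have hdx : 0 < G.degree x := G.degree_pos_iff_exists_adj x |>.2 ⟨y, hC.adj_xy⟩
  have hSx := le_sum_neighborFinset hg₁ hC.nodup_x hC.adj_xy hC.adj_xw hC.adj_xz hC.adj_xa
    hC.adj_xb hC.adj_wa hC.adj_zb
  have hSy := le_sum_neighborFinset (g := -g) (fun u v huv => by
      simp only [Pi.neg_apply]
      linarith [hg₁ v u huv.symm])
    hC.nodup_y hC.adj_xy.symm hC.adj_yw hC.adj_yz hC.adj_yc hC.adj_ye hC.adj_wc hC.adj_ze
  simp only [Pi.neg_apply] at hSy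
  have hK : 0 ≤ g w - g x + (g z - g x) := by
    linarith [hg₁ y w hC.adj_yw, hg₁ y z hC.adj_yz]
  rw [graphLap_sub_graphLap hdx.ne' (hdx.trans_le hd).ne', sub_le_sub_iff_right]
  refine div_add_div_le_div_add_div (K := 2 * (g w - g x + (g z - g x))) (by exact_mod_cast hdx)
    (by exact_mod_cast hd) (by exact_mod_cast (by omega : (0 : ℤ) ≤ _)) ?_ ?_
  · exact_mod_cast (by omega : (4 : ℤ) + 2 * (g w - g x + (g z - g x)) ≤ _)
  · exact_mod_cast (by omega : (8 : ℤ) - 2 * (g w - g x + (g z - g x)) ≤ _)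

theorem exists_graphLap_sub_graphLap_le (hconn : G.Connected) :
    ∃ f : V → ℤ, (∀ u v, |f u - f v| ≤ (G.dist u v : ℤ)) ∧ f y - f x = 1 ∧
      graphLap G f x - graphLap G f y ≤ 4 / (G.degree x : ℝ) + 8 / (G.degree y : ℝ) - 2 := by
  classical
  -- the smallest `1`-Lipschitz function that is `≥ 1` at `y`, `c`, `e` and `≥ 2` at the other
  -- neighbours of `y`
  set P : Finset (V × ℤ) := insert (y, 1) (insert (c, 1) (insert (e, 1)
    (((G.neighborFinset y).filter (· ∉ [x, w, z, c, e])).image (·, 2))))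
  have hP : P.Nonempty := ⟨_, Finset.mem_insert_self _ _⟩
  set f : V → ℤ := fun u => P.sup' hP fun p => p.2 - G.dist u p.1
  have hf : ∀ u m, f u ≤ m ↔ 1 - (G.dist u y : ℤ) ≤ m ∧ 1 - (G.dist u c : ℤ) ≤ m ∧
      1 - (G.dist u e : ℤ) ≤ m ∧ ∀ t, G.Adj y t → t ∉ [x, w, z, c, e] →
        2 - (G.dist u t : ℤ) ≤ m := fun u m => by
    simp only [f, P, Finset.sup'_le_iff, Finset.forall_mem_insert, Finset.forall_mem_image,
      Finset.mem_filter, mem_neighborFinset, and_imp]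
  refine ⟨f, hconn.abs_sup'_sub_dist_sub_le P hP, ?_, hC.graphLap_sub_graphLap_le hconn hf⟩
  rw [apply_y hconn hf, hC.apply_eq_zero hconn hf (by simp)]
  rfl

theorem llyCurv_eq_s16 (hconn : G.Connected) (hd : G.degree x ≤ G.degree y) :
    llyCurv G x y = 4 / (G.degree x : ℝ) + 8 / (G.degree y : ℝ) - 2 := by
  obtain ⟨f, hf, hfxy, hfle⟩ := hC.exists_graphLap_sub_graphLap_le hconn
  refine IsLeast.csInf_eq
    ⟨⟨f, hf, hfxy, (hfle.antisymm (hC.le_graphLap_sub_graphLap hd hf hfxy)).symm⟩, ?_⟩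
  rintro r ⟨g, hg, hgxy, rfl⟩
  exact hC.le_graphLap_sub_graphLap hd hg hgxy

end EdgeConfig_s16

end SimpleGraph

/-- interior edge `xy` with common neighbors `w ≠ z`, where
`δ_xw = 1`, `δ_xz = 1`, `δ_yw = 1`, `δ_yz = 1`. -/
theorem interior_config_16 {V : Type*} [Fintype V]
    (G : SimpleGraph V) [DecidableRel G.Adj]
    (hmax : MaximalOuterplanar G)
    (x y w z : V) (hxy : G.Adj x y) (hd : G.degree x ≤ G.degree y)
    (hwz : w ≠ z)
    (hcom : G.neighborSet x ∩ G.neighborSet y = {w, z})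
    (hxw : ((G.neighborSet x ∩ G.neighborSet w) \ {y}).ncard = 1)
    (hxz : ((G.neighborSet x ∩ G.neighborSet z) \ {y}).ncard = 1)
    (hyw : ((G.neighborSet y ∩ G.neighborSet w) \ {x}).ncard = 1)
    (hyz : ((G.neighborSet y ∩ G.neighborSet z) \ {x}).ncard = 1) :
    llyCurv G x y = 4 / (G.degree x : ℝ) + 8 / (G.degree y : ℝ) - 2 := by
  obtain ⟨a, ha⟩ := Set.ncard_eq_one.1 hxw
  obtain ⟨b, hb⟩ := Set.ncard_eq_one.1 hxz
  obtain ⟨c, hc⟩ := Set.ncard_eq_one.1 hyw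
  obtain ⟨e, he⟩ := Set.ncard_eq_one.1 hyz
  have : Nonempty V := ⟨x⟩
  exact (EdgeConfig_s16.of_outerplanar hmax.1 hxy hwz hcom ha hb hc he).llyCurv_eq_s16
    ⟨hmax.preconnected⟩ hd
end
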